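/- arXiv:q-alg/9711009 — 6 statements merged into one kernel-verified Lean document; each statement's English description precedes it below -/
import Mathlib

section
/- Let n ≥ 2 and l ≥ 1, let a = (a_1 ≤ … ≤ a_l) and b = (b_1 ≤ … ≤ b_l) be elements of B_l, and let d be an integer with 0 ≤ d ≤ l. Then H_l(a,b) ≤ d if and only if a_i < b_{i+d} for every i with 1 ≤ i ≤ l − d. -/
/-!
Energy function of the level-`l` `U_q(sl_n)` vertex model.

`B_l` is the set of weakly increasing sequences `a = (a_0 ≤ … ≤ a_{l-1})`
(0-indexed) with entries in `{1,…,n}`, encoded as functions `a : ℕ → ℕ`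
that are weakly increasing on the first `l` values, take values in `[1,n]`
there, and are `0` elsewhere.
-/

/-- `H_1(a,b) = 0` if `a < b`, `1` otherwise. -/
def H1 (a b : ℕ) : ℕ := if a < b then 0 else 1

/-- The energy function `H_l(a,b) = min_σ Σ_i H_1(a_i, b_{σ(i)})`. -/
noncomputable def Hl (l : ℕ) (a b : ℕ → ℕ) : ℕ :=
  Finset.univ.inf' ⟨1, Finset.mem_univ _⟩
    (fun σ : Equiv.Perm (Fin l) => ∑ i : Fin l, H1 (a i) (b (σ i)))

/-- Membership in `B_l` (with entries in `{1,…,n}`), in the 0-indexed encoding. -/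
def IsBRow (n l : ℕ) (a : ℕ → ℕ) : Prop :=
  (∀ k, k + 1 < l → a k ≤ a (k + 1)) ∧ (∀ k, k < l → 1 ≤ a k ∧ a k ≤ n) ∧
    (∀ k, l ≤ k → a k = 0)


/-!
If `a_i ≥ b_{i+d}`, every permutation `σ` sends at least `d + 1` of the `l - i` positions
`x ≥ i` into the `i + d + 1` positions `≤ i + d` (pigeonhole), and each such pair costs `1`
since `a_x ≥ a_i ≥ b_{i+d} ≥ b_{σ x}`. Conversely, the cyclic shift `x ↦ x + d` costs nothing
on the positions with `x + d < l`, and only `d` positions wrap around.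
-/

open Finset

lemma IsBRow.monotoneOn {n l : ℕ} {a : ℕ → ℕ} (ha : IsBRow n l a) :
    MonotoneOn a (Set.Iio l) :=
  monotoneOn_of_le_add_one Set.ordConnected_Iio fun k _ _ hk => ha.1 k hk

lemma H1_le_one (a b : ℕ) : H1 a b ≤ 1 := by
  unfold H1; split <;> omega

lemma Hl_le_iff {l d : ℕ} {a b : ℕ → ℕ} :
    Hl l a b ≤ d ↔ ∃ σ : Equiv.Perm (Fin l), ∑ x : Fin l, H1 (a x) (b (σ x)) ≤ d := by
  unfold Hl
  exact (Finset.inf'_le_iff _).trans (by simp only [mem_univ, true_and])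

lemma Fin.card_filter_le_val (l m : ℕ) : #{x : Fin l | m ≤ (x : ℕ)} = l - m := by
  have := card_filter_add_card_filter_not (s := (univ : Finset (Fin l))) fun x => (x : ℕ) < m
  simp only [not_lt, card_univ, Fintype.card_fin, Fin.card_filter_val_lt] at this
  omega

lemma Equiv.Perm.card_filter_apply_val_lt {l : ℕ} (σ : Equiv.Perm (Fin l)) (m : ℕ) :
    #{x : Fin l | (σ x : ℕ) < m} = min l m := by
  rw [← Fin.card_filter_val_lt, ← card_map σ.toEmbedding, map_filter]
  simp

lemma Equiv.Perm.le_add_card_filter_le_and_apply_lt {l i j : ℕ} (σ : Equiv.Perm (Fin l))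
    (hj : j ≤ l) : j ≤ i + #{x : Fin l | i ≤ (x : ℕ) ∧ (σ x : ℕ) < j} := by
  have hs := Fin.card_filter_le_val l i
  have ht := σ.card_filter_apply_val_lt j
  have hinter := card_inter_add_card_union (s := ({x | i ≤ (x : ℕ)} : Finset (Fin l)))
    (t := {x | (σ x : ℕ) < j})
  have hunion := card_le_univ
    (({x | i ≤ (x : ℕ)} : Finset (Fin l)) ∪ ({x | (σ x : ℕ) < j} : Finset (Fin l)))
  rw [← filter_and] at hinter
  rw [Fintype.card_fin] at hunion
  omega

lemma le_sum_H1_of_le {l i d : ℕ} {a b : ℕ → ℕ} (ha : MonotoneOn a (Set.Iio l))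
    (hb : MonotoneOn b (Set.Iio l)) (hid : i + d < l) (hab : b (i + d) ≤ a i)
    (σ : Equiv.Perm (Fin l)) : d + 1 ≤ ∑ x : Fin l, H1 (a x) (b (σ x)) := by
  set S : Finset (Fin l) := {x | i ≤ (x : ℕ) ∧ (σ x : ℕ) < i + d + 1}
  have hS : i + d + 1 ≤ i + #S := σ.le_add_card_filter_le_and_apply_lt hid
  have hcost : ∀ x ∈ S, H1 (a x) (b (σ x)) = 1 := by
    intro x hx
    obtain ⟨hix, hσx⟩ := (mem_filter.mp hx).2
    have : b (σ x) ≤ a x := calc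
      b (σ x) ≤ b (i + d) := hb (σ x).isLt hid (by omega)
      _ ≤ a i := hab
      _ ≤ a x := ha (Set.mem_Iio.mpr (by omega)) x.isLt hix
    simp [H1, this]
  calc d + 1 ≤ #S := by omega
    _ = ∑ x ∈ S, H1 (a x) (b (σ x)) := by rw [sum_congr rfl hcost, card_eq_sum_ones]
    _ ≤ ∑ x : Fin l, H1 (a x) (b (σ x)) := sum_le_sum_of_subset (subset_univ S)

lemma sum_H1_addRight_le {l d : ℕ} [NeZero l] {a b : ℕ → ℕ}
    (h : ∀ i, i + d < l → a i < b (i + d)) :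
    ∑ x : Fin l, H1 (a x) (b (Equiv.addRight (Fin.ofNat l d) x)) ≤ d := calc
  _ ≤ ∑ x : Fin l, if l - d ≤ (x : ℕ) then 1 else 0 := sum_le_sum fun x _ => by
      split_ifs with hx
      · exact H1_le_one _ _
      · have hxd : ((x + Fin.ofNat l d : Fin l) : ℕ) = x + d := by
          rw [Fin.val_add, Fin.val_ofNat, Nat.add_mod_mod, Nat.mod_eq_of_lt (by omega)]
        rw [H1, Equiv.coe_addRight, hxd, if_pos (h x (by omega))]
  _ = l - (l - d) := by rw [← card_filter, Fin.card_filter_le_val]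
  _ ≤ d := by omega

theorem energy_le_iff_general (n l : ℕ) (hl : 1 ≤ l)
    (a b : ℕ → ℕ) (ha : IsBRow n l a) (hb : IsBRow n l b)
    (d : ℕ) :
    Hl l a b ≤ d ↔ ∀ i : ℕ, i + d < l → a i < b (i + d) := by
  have : NeZero l := ⟨by omega⟩
  rw [Hl_le_iff]
  constructor
  · rintro ⟨σ, hσ⟩ i hid
    by_contra! hab
    have := le_sum_H1_of_le ha.monotoneOn hb.monotoneOn hid hab σ
    omega
  · exact fun h => ⟨_, sum_H1_addRight_le h⟩

/-- For `a, b ∈ B_l` and `0 ≤ d ≤ l`, one has `H_l(a,b) ≤ d`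
iff `a_i < b_{i+d}` for all `1 ≤ i ≤ l - d` (0-indexed: for all `i` with `i + d < l`). -/
theorem energy_le_iff (n l : ℕ) (hn : 2 ≤ n) (hl : 1 ≤ l)
    (a b : ℕ → ℕ) (ha : IsBRow n l a) (hb : IsBRow n l b)
    (d : ℕ) (hd : d ≤ l) :
    Hl l a b ≤ d ↔ ∀ i : ℕ, i + d < l → a i < b (i + d) :=
  energy_le_iff_general n l hl a b ha hb d
end

section
/- Let n ≥ 2 and l ≥ 1, let a, b ∈ B_l, and let 0 ≤ d ≤ l. Then H_l(a,b) = d if and only if the two-row skew tableau T_d(a,b) is nonmovable; equivalently, H_l(a,b) equals the smallest d ∈ {0,1,…,l} such that a_i < b_{i+d} for all 1 ≤ i ≤ l − d. -/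
/-- `f` is a filling of the shape with `m` rows of lengths `len`. -/
def IsFilling (m : ℕ) (len : ℕ → ℕ) (f : ℕ → ℕ → ℕ) : Prop :=
  (∀ i k, i < m → k < len i → 0 < f i k) ∧
  (∀ i k, m ≤ i ∨ len i ≤ k → f i k = 0)

/-- rows weakly increase from left to right. -/
def RowsWeak (m : ℕ) (len : ℕ → ℕ) (f : ℕ → ℕ → ℕ) : Prop :=
  ∀ i, i < m → ∀ k, k + 1 < len i → f i k ≤ f i (k + 1)

/-- columns strictly increase from top to bottom (rows indexed top to bottom). -/
def ColsStrict (m : ℕ) (off len : ℕ → ℕ) (f : ℕ → ℕ → ℕ) : Prop :=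
  ∀ i j, i + 1 < m → off i ≤ j → j < off i + len i →
    off (i + 1) ≤ j → j < off (i + 1) + len (i + 1) →
    f i (j - off i) < f (i + 1) (j - off (i + 1))

def Semistandard (m : ℕ) (off len : ℕ → ℕ) (f : ℕ → ℕ → ℕ) : Prop :=
  RowsWeak m len f ∧ ColsStrict m off len f

/-- The row data `(off, len)` describes a skew diagram `λ/μ`
(rows listed top to bottom). -/
def IsSkewShape (m : ℕ) (off len : ℕ → ℕ) : Prop :=
  ∀ i, i + 1 < m → off (i + 1) ≤ off i ∧ off (i + 1) + len (i + 1) ≤ off i + len i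

/-- move row `i0` one column to the left. -/
def shiftRow (off : ℕ → ℕ) (i0 : ℕ) : ℕ → ℕ := fun i => if i = i0 then off i - 1 else off i

/-- `f` is a nonmovable tableau of the given shape: it is semistandard, and no
(nonempty) row can be moved one box to the left keeping a semistandard filling of a
skew diagram. -/
def Nonmovable (m : ℕ) (off len : ℕ → ℕ) (f : ℕ → ℕ → ℕ) : Prop :=
  Semistandard m off len f ∧
  ∀ i0, i0 < m → 0 < len i0 →
    ¬ (0 < off i0 ∧ IsSkewShape m (shiftRow off i0) len ∧
        Semistandard m (shiftRow off i0) len f)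

/-- the shape of `T_d(a,b)`: top row (`a`) in columns `d,…,d+l-1`,
bottom row (`b`) in columns `0,…,l-1`. -/
def Toff (d : ℕ) : ℕ → ℕ := fun i => if i = 0 then d else 0

/-- the filling `T_d(a,b)`. -/
def Tfill (l : ℕ) (a b : ℕ → ℕ) : ℕ → ℕ → ℕ :=
  fun i k => if k < l then (if i = 0 then a k else if i = 1 then b k else 0) else 0

/-!
The energy `H_l(a,b)` is attained by a permutation `σ`. The cyclic shift `i ↦ i + d` shows
`H_l(a,b) ≤ d` as soon as `a_i < b_{i+d}` for all `i + d < l`. Conversely, if `c = H_l(a,b)` is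
attained by `σ` and `a_i ≥ b_{i+c}`, then at least `c + 1` indices `j ≥ i` have `σ j ≤ i + c`;
each of them has `a_j ≥ a_i ≥ b_{i+c} ≥ b_{σ j}` and costs `1`, which is too many. Hence
`H_l(a,b)` is the least such shift. Semistandardness of `T_d(a,b)` is exactly this column
condition at shift `d`, and moving its top row left replaces `d` by `d - 1`, so nonmovability
says that `d` is the least shift.
-/

open Finset

/-- The columns of `T_d(a,b)` strictly increase. -/
def LtShift (l : ℕ) (a b : ℕ → ℕ) (d : ℕ) : Prop :=
  ∀ i, i + d < l → a i < b (i + d)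

lemma LtShift.mono {l : ℕ} {a b : ℕ → ℕ} (hb : MonotoneOn b (Set.Iio l)) {d e : ℕ}
    (hde : d ≤ e) (h : LtShift l a b d) : LtShift l a b e := fun i hi =>
  (h i (by omega)).trans_le
    (hb (by simp only [Set.mem_Iio]; omega) (by simpa using hi) (by omega))

lemma H1_le_one_s1 (x y : ℕ) : H1 x y ≤ 1 := by
  unfold H1; split_ifs <;> simp

lemma H1_eq_one_of_le {x y : ℕ} (h : y ≤ x) : H1 x y = 1 := if_neg (not_lt.2 h)

lemma Hl_le_sum (l : ℕ) (a b : ℕ → ℕ) (σ : Equiv.Perm (Fin l)) :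
    Hl l a b ≤ ∑ i : Fin l, H1 (a i) (b (σ i)) :=
  inf'_le _ (mem_univ σ)

lemma exists_perm_sum_eq_Hl (l : ℕ) (a b : ℕ → ℕ) :
    ∃ σ : Equiv.Perm (Fin l), ∑ i : Fin l, H1 (a i) (b (σ i)) = Hl l a b := by
  obtain ⟨σ, -, hσ⟩ := exists_mem_eq_inf' (s := univ) ⟨1, mem_univ _⟩
    (fun σ : Equiv.Perm (Fin l) => ∑ i : Fin l, H1 (a i) (b (σ i)))
  exact ⟨σ, hσ.symm⟩

lemma card_range_filter_le_add (l e : ℕ) : #{i ∈ range l | l ≤ i + e} ≤ e :=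
  calc #{i ∈ range l | l ≤ i + e} ≤ #(Ico (l - e) l) :=
        card_le_card fun i hi => by simp only [mem_filter, mem_range, mem_Ico] at hi ⊢; omega
    _ ≤ e := by rw [Nat.card_Ico]; omega

lemma Hl_le_of_ltShift {l e : ℕ} {a b : ℕ → ℕ} (h : LtShift l a b e) : Hl l a b ≤ e := by
  rcases Nat.eq_zero_or_pos l with rfl | hl
  · simp [Hl]
  have : NeZero l := ⟨hl.ne'⟩
  let σ : Equiv.Perm (Fin l) := Equiv.addRight (Fin.ofNat l e)
  have hσ : ∀ i : Fin l, H1 (a i) (b (σ i)) ≤ if l ≤ (i : ℕ) + e then 1 else 0 := by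
    intro i
    split_ifs with hi
    · exact H1_le_one_s1 _ _
    · have hσi : ((σ i : Fin l) : ℕ) = i + e := by
        simp only [σ, Equiv.coe_addRight, Fin.val_add, Fin.val_ofNat, Nat.add_mod_mod]
        exact Nat.mod_eq_of_lt (by omega)
      simp [H1, hσi, h i (by omega)]
  calc Hl l a b ≤ ∑ i : Fin l, H1 (a i) (b (σ i)) := Hl_le_sum l a b σ
    _ ≤ ∑ i : Fin l, if l ≤ (i : ℕ) + e then 1 else 0 := sum_le_sum fun i _ => hσ i
    _ = #{i ∈ range l | l ≤ i + e} := by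
        rw [Fin.sum_univ_eq_sum_range (fun i => if l ≤ i + e then 1 else 0), sum_boole]; rfl
    _ ≤ e := card_range_filter_le_add l e

lemma Hl_le (l : ℕ) (a b : ℕ → ℕ) : Hl l a b ≤ l :=
  Hl_le_of_ltShift fun i hi => by omega

lemma le_card_filter_perm_le {l : ℕ} (σ : Equiv.Perm (Fin l)) (i k : Fin l) :
    (k : ℕ) + 1 ≤ i + #{j | i ≤ j ∧ σ j ≤ k} := by
  have hk : #{j | σ j ≤ k} = k + 1 := by
    rw [← Fin.card_Iic k]
    exact card_equiv σ (by simp)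
  calc (k : ℕ) + 1 = #{j | σ j ≤ k} := hk.symm
    _ ≤ #(Iio i ∪ ({j | i ≤ j ∧ σ j ≤ k} : Finset (Fin l))) :=
        card_le_card fun j hj => by
          simp only [mem_filter, mem_univ, true_and, mem_union, mem_Iio] at hj ⊢
          exact (lt_or_ge j i).imp_right fun hij => ⟨hij, hj⟩
    _ ≤ #(Iio i) + #{j | i ≤ j ∧ σ j ≤ k} := card_union_le _ _
    _ = i + #{j | i ≤ j ∧ σ j ≤ k} := by rw [Fin.card_Iio]

lemma ltShift_Hl {l : ℕ} {a b : ℕ → ℕ} (ha : MonotoneOn a (Set.Iio l))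
    (hb : MonotoneOn b (Set.Iio l)) : LtShift l a b (Hl l a b) := by
  obtain ⟨σ, hσ⟩ := exists_perm_sum_eq_Hl l a b
  set c := Hl l a b
  intro i hi
  by_contra! hba
  let S : Finset (Fin l) := {j | ⟨i, by omega⟩ ≤ j ∧ σ j ≤ ⟨i + c, hi⟩}
  have hcost : ∀ j ∈ S, H1 (a j) (b (σ j)) = 1 := by
    intro j hj
    simp only [S, mem_filter, mem_univ, true_and, Fin.le_def] at hj
    refine H1_eq_one_of_le ((hb ?_ ?_ hj.2).trans (hba.trans (ha ?_ ?_ hj.1))) <;>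
      simp only [Set.mem_Iio] <;> omega
  have hlower : c + 1 ≤ #S := by
    have := le_card_filter_perm_le σ ⟨i, by omega⟩ ⟨i + c, hi⟩
    change i + c + 1 ≤ i + #S at this
    omega
  have hupper : #S ≤ c :=
    calc #S = ∑ j ∈ S, H1 (a j) (b (σ j)) := by rw [sum_congr rfl hcost, card_eq_sum_ones]
      _ ≤ ∑ j : Fin l, H1 (a j) (b (σ j)) := sum_le_sum_of_subset (subset_univ S)
      _ = c := hσ
  omega

lemma Hl_eq_iff {l d : ℕ} {a b : ℕ → ℕ} (ha : MonotoneOn a (Set.Iio l))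
    (hb : MonotoneOn b (Set.Iio l)) :
    Hl l a b = d ↔ LtShift l a b d ∧ (0 < d → ¬ LtShift l a b (d - 1)) := by
  constructor
  · rintro rfl
    exact ⟨ltShift_Hl ha hb, fun hd h => by have := Hl_le_of_ltShift h; omega⟩
  · rintro ⟨hd, hmin⟩
    refine (Hl_le_of_ltShift hd).antisymm (not_lt.1 fun hlt => hmin (by omega) ?_)
    exact (ltShift_Hl ha hb).mono hb (by omega)

lemma rowsWeak_Tfill {l : ℕ} {a b : ℕ → ℕ} (ha : MonotoneOn a (Set.Iio l))
    (hb : MonotoneOn b (Set.Iio l)) : RowsWeak 2 (fun _ => l) (Tfill l a b) := by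
  intro i hi k hk
  have hk1 : k + 1 < l := hk
  have hk' : k < l := by omega
  interval_cases i <;> simp only [Tfill, if_pos hk', if_pos hk1, if_true, one_ne_zero, if_false]
  · exact ha (by simpa using hk') (by simpa using hk1) (by omega)
  · exact hb (by simpa using hk') (by simpa using hk1) (by omega)

lemma colsStrict_Tfill_iff (l d : ℕ) (a b : ℕ → ℕ) :
    ColsStrict 2 (Toff d) (fun _ => l) (Tfill l a b) ↔ LtShift l a b d := by
  constructor
  · intro h i hi
    simpa [Toff, Tfill, hi, show i < l by omega] using
      h 0 (i + d) (by norm_num) (by simp [Toff]) (by simp [Toff]; omega) (by simp [Toff])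
        (by simp [Toff]; omega)
  · intro h i j hi hdj _ _ hjl
    obtain rfl : i = 0 := by omega
    simp only [Toff, if_true, zero_add, one_ne_zero, if_false] at hdj hjl
    simpa [Tfill, Toff, hjl, show j - d < l by omega, show j - d + d = j by omega] using
      h (j - d) (by omega)

lemma semistandard_T_iff {l d : ℕ} {a b : ℕ → ℕ} (ha : MonotoneOn a (Set.Iio l))
    (hb : MonotoneOn b (Set.Iio l)) :
    Semistandard 2 (Toff d) (fun _ => l) (Tfill l a b) ↔ LtShift l a b d :=
  (and_iff_right (rowsWeak_Tfill ha hb)).trans (colsStrict_Tfill_iff l d a b)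

lemma shiftRow_Toff_zero (d : ℕ) : shiftRow (Toff d) 0 = Toff (d - 1) := by
  funext i
  by_cases h : i = 0 <;> simp [shiftRow, Toff, h]

lemma isSkewShape_Toff (d l : ℕ) : IsSkewShape 2 (Toff d) (fun _ => l) := by
  intro i hi
  obtain rfl : i = 0 := by omega
  simp [Toff]

lemma nonmovable_T_iff {l d : ℕ} (hl : 1 ≤ l) {a b : ℕ → ℕ} (ha : MonotoneOn a (Set.Iio l))
    (hb : MonotoneOn b (Set.Iio l)) :
    Nonmovable 2 (Toff d) (fun _ => l) (Tfill l a b) ↔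
      LtShift l a b d ∧ (0 < d → ¬ LtShift l a b (d - 1)) := by
  rw [Nonmovable, semistandard_T_iff ha hb]
  refine and_congr_right fun _ => ⟨fun h hd hP => ?_, ?_⟩
  · refine h 0 two_pos hl ⟨by simpa [Toff] using hd, ?_, ?_⟩
    · rw [shiftRow_Toff_zero]
      exact isSkewShape_Toff _ _
    · rwa [shiftRow_Toff_zero, semistandard_T_iff ha hb]
  · rintro h i0 hi0 - ⟨hpos, -, hsemi⟩
    interval_cases i0
    · rw [shiftRow_Toff_zero, semistandard_T_iff ha hb] at hsemi
      exact h (by simpa [Toff] using hpos) hsemi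
    · simp [Toff] at hpos

theorem energy_eq_iff_nonmovable_general (n l : ℕ) (hl : 1 ≤ l)
    (a b : ℕ → ℕ) (ha : IsBRow n l a) (hb : IsBRow n l b)
    (d : ℕ) :
    (Hl l a b = d ↔ Nonmovable 2 (Toff d) (fun _ => l) (Tfill l a b)) ∧
    IsLeast {e : ℕ | e ≤ l ∧ ∀ i : ℕ, i + e < l → a i < b (i + e)} (Hl l a b) := by
  have hma := ha.monotoneOn
  have hmb := hb.monotoneOn
  refine ⟨(Hl_eq_iff hma hmb).trans (nonmovable_T_iff hl hma hmb).symm, ?_, ?_⟩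
  · exact ⟨Hl_le l a b, ltShift_Hl hma hmb⟩
  · exact fun _ he => Hl_le_of_ltShift he.2

/-- `H_l(a,b) = d` iff `T_d(a,b)` is nonmovable; equivalently,
`H_l(a,b)` is the smallest `d ∈ {0,…,l}` with `a_i < b_{i+d}` for all `i + d < l`
(0-indexed). -/
theorem energy_eq_iff_nonmovable (n l : ℕ) (hn : 2 ≤ n) (hl : 1 ≤ l)
    (a b : ℕ → ℕ) (ha : IsBRow n l a) (hb : IsBRow n l b)
    (d : ℕ) (hd : d ≤ l) :
    (Hl l a b = d ↔ Nonmovable 2 (Toff d) (fun _ => l) (Tfill l a b)) ∧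
    IsLeast {e : ℕ | e ≤ l ∧ ∀ i : ℕ, i + e < l → a i < b (i + e)} (Hl l a b) :=
  energy_eq_iff_nonmovable_general n l hl a b ha hb d
end

section
/- Fix n ≥ 2 and l ≥ 1, and let h = (h_i)_{i≥1} ∈ {0,1,…,l}^ℕ. The following conditions are equivalent: (i) h lies in the image ρ(B_l^ℕ) of the local energy map; (ii) there exists a nonmovable tableau of shape κ̃(h) with entries in {1,…,n}; (iii) every column of κ̃(h) contains at most n boxes; (iv) h_i + h_{i+1} + ⋯ + h_{i+n−1} ≥ l for every i ≥ 1. -/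
def IsPath (n l : ℕ) (s : ℕ → ℕ → ℕ) : Prop := ∀ i, IsBRow n l (s i)

noncomputable def locEnergy (l : ℕ) (s : ℕ → ℕ → ℕ) : ℕ → ℕ :=
  fun i => Hl l (s (i + 1)) (s i)

def Ooff (h : ℕ → ℕ) : ℕ → ℕ := fun i => ∑ j ∈ Finset.range i, h j

def InfIsFilling (len : ℕ → ℕ) (f : ℕ → ℕ → ℕ) : Prop :=
  (∀ i k, k < len i → 0 < f i k) ∧ (∀ i k, len i ≤ k → f i k = 0)

def InfEntriesLE (n : ℕ) (f : ℕ → ℕ → ℕ) : Prop := ∀ i k, f i k ≤ n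

def InfRowsWeak (len : ℕ → ℕ) (f : ℕ → ℕ → ℕ) : Prop :=
  ∀ i k, k + 1 < len i → f i k ≤ f i (k + 1)

def InfColsStrict (off len : ℕ → ℕ) (f : ℕ → ℕ → ℕ) : Prop :=
  ∀ i j, off (i + 1) ≤ j → j < off (i + 1) + len (i + 1) →
    off i ≤ j → j < off i + len i →
    f (i + 1) (j - off (i + 1)) < f i (j - off i)

def InfSemistandard (off len : ℕ → ℕ) (f : ℕ → ℕ → ℕ) : Prop :=
  InfRowsWeak len f ∧ InfColsStrict off len f

def InfIsSkewShape (off len : ℕ → ℕ) : Prop :=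
  ∀ i, off i ≤ off (i + 1) ∧ off i + len i ≤ off (i + 1) + len (i + 1)

def InfShift (off : ℕ → ℕ) (i0 : ℕ) : ℕ → ℕ := fun i => if i = i0 then off i - 1 else off i

def InfNonmovable (off len : ℕ → ℕ) (f : ℕ → ℕ → ℕ) : Prop :=
  InfSemistandard off len f ∧
  ∀ i0, 0 < len i0 →
    ¬ (0 < off i0 ∧ InfIsSkewShape (InfShift off i0) len ∧
        InfSemistandard (InfShift off i0) len f)

def NMTinf (n l : ℕ) (h : ℕ → ℕ) : Set (ℕ → ℕ → ℕ) :=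
  {f | InfIsFilling (fun _ => l) f ∧ InfEntriesLE n f ∧
    InfNonmovable (Ooff h) (fun _ => l) f}

/-!
Write `O i = h₀ + ⋯ + h_{i-1}` for the column where row `i` of `κ̃(h)` starts (columns and rows
are indexed from `0` here). If `h_i + ⋯ + h_{i+n-1} < l`, then column `O (i + n)` meets the `n + 1`
rows `i, …, i + n`, which rules out (ii) and (iii) at once; and the counting inequality
`#{k | b_k ≤ c + 1} ≤ H(a, b) + #{k | a_k ≤ c}`, iterated `n` times along a path from row `i` to
row `i + n`, rules out (i).

Conversely, under (iv) every column has at most `n` boxes, and filling each box with its depth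
below the top of its column gives both a nonmovable tableau and a path with local energies `h`:
row `i` starts with exactly `h_i` ones, and the cyclic shift by `h_i` places every box of row
`i + 1` strictly above a larger entry of row `i`, except for `h_i` of them.
-/

open Finset

lemma Ooff_succ (h : ℕ → ℕ) (i : ℕ) : Ooff h (i + 1) = Ooff h i + h i :=
  sum_range_succ h i

lemma Ooff_add (h : ℕ → ℕ) (i m : ℕ) :
    Ooff h (i + m) = Ooff h i + ∑ j ∈ range m, h (i + j) :=
  sum_range_add h i m

lemma Ooff_mono (h : ℕ → ℕ) : Monotone (Ooff h) := fun _ _ hii =>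
  sum_le_sum_of_subset (range_mono hii)

lemma mem_column_of_sum_lt {n l : ℕ} {h : ℕ → ℕ} {i r : ℕ}
    (hlt : ∑ j ∈ range n, h (i + j) < l) (hir : i ≤ r) (hrn : r ≤ i + n) :
    Ooff h r ≤ Ooff h (i + n) ∧ Ooff h (i + n) < Ooff h r + l := by
  have := Ooff_mono h hir
  have := Ooff_add h i n
  exact ⟨Ooff_mono h hrn, by omega⟩

lemma InfColsStrict.add_le_of_mem_column {off len : ℕ → ℕ} {f : ℕ → ℕ → ℕ}
    (hf : InfColsStrict off len f) {i j m : ℕ}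
    (hcol : ∀ r, i ≤ r → r ≤ i + m → off r ≤ j ∧ j < off r + len r) :
    f (i + m) (j - off (i + m)) + m ≤ f i (j - off i) := by
  induction m with
  | zero => simp
  | succ m ih =>
    have hstep := hf (i + m) j (hcol _ (by omega) le_rfl).1 (hcol _ (by omega) le_rfl).2
      (hcol _ (by omega) (by omega)).1 (hcol _ (by omega) (by omega)).2
    have := ih fun r hir hrm => hcol r hir (by omega)
    show f (i + m + 1) (j - off (i + m + 1)) + (m + 1) ≤ _
    omega

def countLE (l : ℕ) (x : ℕ → ℕ) (c : ℕ) : ℕ := #{k : Fin l | x k ≤ c}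

lemma countLE_of_forall_le {l : ℕ} {x : ℕ → ℕ} {c : ℕ} (hx : ∀ k < l, x k ≤ c) :
    countLE l x c = l := by
  rw [countLE, filter_true_of_mem fun (k : Fin l) _ => hx k k.isLt, card_univ, Fintype.card_fin]

lemma countLE_zero_of_pos {l : ℕ} {x : ℕ → ℕ} (hx : ∀ k < l, 0 < x k) :
    countLE l x 0 = 0 := by
  rw [countLE, filter_false_of_mem fun (k : Fin l) _ => (hx k k.isLt).not_ge, card_empty]

lemma le_countLE_of_lt_le {l d : ℕ} {x : ℕ → ℕ} {c : ℕ} (hd : d ≤ l)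
    (hx : ∀ k < d, x k ≤ c) : d ≤ countLE l x c :=
  calc d = #{k : Fin l | (k : ℕ) < d} := by rw [Fin.card_filter_val_lt, min_eq_right hd]
    _ ≤ countLE l x c := card_le_card fun k hk => by
      simp only [mem_filter, mem_univ, true_and] at hk ⊢
      exact hx k hk

lemma countLE_succ_le_Hl_add (l : ℕ) (a b : ℕ → ℕ) (c : ℕ) :
    countLE l b (c + 1) ≤ Hl l a b + countLE l a c := by
  obtain ⟨σ, -, hσ⟩ := exists_mem_eq_inf' (univ_nonempty (α := Equiv.Perm (Fin l)))
    (fun σ => ∑ k : Fin l, H1 (a k) (b (σ k)))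
  have hpoint : ∀ k : Fin l, (if b (σ k) ≤ c + 1 then 1 else 0) ≤
      H1 (a k) (b (σ k)) + if a k ≤ c then 1 else 0 := by
    intro k
    unfold H1
    split_ifs <;> omega
  calc countLE l b (c + 1) = ∑ k : Fin l, if b (σ k) ≤ c + 1 then 1 else 0 := by
        rw [countLE, card_filter, Equiv.sum_comp σ fun k => if b k ≤ c + 1 then 1 else 0]
    _ ≤ ∑ k : Fin l, (H1 (a k) (b (σ k)) + if a k ≤ c then 1 else 0) :=
        sum_le_sum fun k _ => hpoint k
    _ = Hl l a b + countLE l a c := by rw [sum_add_distrib, Hl, hσ, countLE, card_filter]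

lemma countLE_le_sum_locEnergy_add {l : ℕ} (s : ℕ → ℕ → ℕ) (i c m : ℕ) :
    countLE l (s i) (c + m) ≤
      ∑ j ∈ range m, locEnergy l s (i + j) + countLE l (s (i + m)) c := by
  induction m generalizing c with
  | zero => simp
  | succ m ih =>
    have hstep := countLE_succ_le_Hl_add l (s (i + m + 1)) (s (i + m)) c
    have := ih (c + 1)
    rw [sum_range_succ, locEnergy, ← add_assoc i m 1]
    rw [show c + 1 + m = c + (m + 1) by omega] at this
    omega

lemma Hl_le_of_lt_shift {l d : ℕ} {a b : ℕ → ℕ} (hd : d ≤ l)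
    (hab : ∀ k, k + d < l → a k < b (k + d)) : Hl l a b ≤ d := by
  rcases l with _ | l
  · simp [Hl]
  set σ : Equiv.Perm (Fin (l + 1)) := Equiv.addRight (Fin.ofNat (l + 1) d)
  have hσ : ∀ k : Fin (l + 1), (k : ℕ) + d < l + 1 → (σ k : ℕ) = k + d := fun k hk => by
    rw [Equiv.coe_addRight, Fin.val_add, Fin.val_ofNat, Nat.add_mod_mod, Nat.mod_eq_of_lt hk]
  have hpoint : ∀ k : Fin (l + 1),
      H1 (a k) (b (σ k)) + (if (k : ℕ) < l + 1 - d then 1 else 0) ≤ 1 := by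
    intro k
    unfold H1
    by_cases hk : (k : ℕ) + d < l + 1
    · have := hab k hk
      rw [hσ k hk]
      split_ifs <;> omega
    · split_ifs <;> omega
  have hsum := sum_le_sum fun k (_ : k ∈ univ) => hpoint k
  rw [sum_add_distrib, ← card_filter, Fin.card_filter_val_lt, sum_const, card_univ,
    Fintype.card_fin, smul_eq_mul, mul_one] at hsum
  exact (inf'_le _ (mem_univ σ)).trans (by omega)

lemma le_sum_locEnergy_of_isPath {n l : ℕ} {s : ℕ → ℕ → ℕ} (hs : IsPath n l s) (i : ℕ) :
    l ≤ ∑ j ∈ range n, locEnergy l s (i + j) := by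
  have := countLE_le_sum_locEnergy_add (l := l) s i 0 n
  rwa [zero_add, countLE_of_forall_le fun k hk => ((hs i).2.1 k hk).2,
    countLE_zero_of_pos fun k hk => ((hs (i + n)).2.1 k hk).1, add_zero] at this

lemma le_sum_of_colsStrict {n l : ℕ} {h : ℕ → ℕ} {f : ℕ → ℕ → ℕ}
    (hfill : InfIsFilling (fun _ => l) f) (hle : InfEntriesLE n f)
    (hcols : InfColsStrict (Ooff h) (fun _ => l) f) (i : ℕ) :
    l ≤ ∑ j ∈ range n, h (i + j) := by
  by_contra! hlt
  have hchain := hcols.add_le_of_mem_column fun r hir hrn => mem_column_of_sum_lt hlt hir hrn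
  rw [Nat.sub_self] at hchain
  have := hfill.1 (i + n) 0 (show 0 < l by omega)
  have := hle i (Ooff h (i + n) - Ooff h i)
  omega

lemma le_sum_of_ncard_column_le {n l : ℕ} {h : ℕ → ℕ}
    (hcol : ∀ j, {i | Ooff h i ≤ j ∧ j < Ooff h i + l}.Finite ∧
      {i | Ooff h i ≤ j ∧ j < Ooff h i + l}.ncard ≤ n) (i : ℕ) :
    l ≤ ∑ j ∈ range n, h (i + j) := by
  by_contra! hlt
  obtain ⟨hfin, hcard⟩ := hcol (Ooff h (i + n))
  have hsub : (Icc i (i + n) : Set ℕ) ⊆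
      {r | Ooff h r ≤ Ooff h (i + n) ∧ Ooff h (i + n) < Ooff h r + l} :=
    fun r hr => mem_column_of_sum_lt hlt (mem_Icc.1 hr).1 (mem_Icc.1 hr).2
  have := Set.ncard_le_ncard hsub hfin
  rw [Set.ncard_coe_finset, Nat.card_Icc] at this
  omega

/-- The top row of column `j` of `κ̃(h)`. The search bound `n * (j + 1)` is large enough as soon as
every `n` consecutive `h_i` have positive sum. -/
def lastRow (n : ℕ) (h : ℕ → ℕ) (j : ℕ) : ℕ :=
  Nat.findGreatest (fun i => Ooff h i ≤ j) (n * (j + 1))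

section LastRow

variable {n : ℕ} {h : ℕ → ℕ} (hpos : ∀ i, 0 < ∑ j ∈ range n, h (i + j))
include hpos

lemma le_Ooff_mul (k : ℕ) : k ≤ Ooff h (n * k) := by
  induction k with
  | zero => omega
  | succ k ih =>
    have := hpos (n * k)
    rw [mul_add_one, Ooff_add]
    omega

lemma le_lastRow_iff {i j : ℕ} : i ≤ lastRow n h j ↔ Ooff h i ≤ j := by
  constructor
  · intro hi
    exact (Ooff_mono h hi).trans
      (Nat.findGreatest_spec (P := fun i => Ooff h i ≤ j) (Nat.zero_le _) (by simp [Ooff]))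
  · intro hij
    refine Nat.le_findGreatest ?_ hij
    by_contra! hbig
    have := le_Ooff_mul hpos (j + 1)
    have := Ooff_mono h hbig.le
    omega

lemma lastRow_mono : Monotone (lastRow n h) := fun _ _ hjj =>
  (le_lastRow_iff hpos).2 (((le_lastRow_iff hpos).1 le_rfl).trans hjj)

lemma lastRow_Ooff_add {i k : ℕ} (hk : k < h i) : lastRow n h (Ooff h i + k) = i := by
  have hi := (le_lastRow_iff hpos (i := i) (j := Ooff h i + k)).2 (by omega)
  have hi' := (le_lastRow_iff hpos (i := i + 1) (j := Ooff h i + k)).not.2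
    (by rw [Ooff_succ]; omega)
  omega

lemma lastRow_lt_add {l i j : ℕ} (hiv : ∀ i, l ≤ ∑ j ∈ range n, h (i + j))
    (hj : j < Ooff h i + l) : lastRow n h j < i + n := by
  by_contra! hbig
  have := (le_lastRow_iff hpos).1 hbig
  have := hiv i
  rw [Ooff_add] at *
  omega

end LastRow

lemma ncard_column_le {n l : ℕ} {h : ℕ → ℕ} (hpos : ∀ i, 0 < ∑ j ∈ range n, h (i + j))
    (hiv : ∀ i, l ≤ ∑ j ∈ range n, h (i + j)) (j : ℕ) :
    {i : ℕ | Ooff h i ≤ j ∧ j < Ooff h i + l}.Finite ∧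
      {i : ℕ | Ooff h i ≤ j ∧ j < Ooff h i + l}.ncard ≤ n := by
  set M := lastRow n h j
  have hsub : {i : ℕ | Ooff h i ≤ j ∧ j < Ooff h i + l} ⊆ Icc (M + 1 - n) M := by
    rintro i ⟨hij, hjl⟩
    have := (le_lastRow_iff hpos).2 hij
    have := lastRow_lt_add hpos hiv hjl
    simp only [coe_Icc, Set.mem_Icc]
    omega
  refine ⟨(Icc (M + 1 - n) M).finite_toSet.subset hsub, ?_⟩
  have := Set.ncard_le_ncard hsub (Icc (M + 1 - n) M).finite_toSet
  rw [Set.ncard_coe_finset, Nat.card_Icc] at this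
  omega

def canonicalFilling (n l : ℕ) (h : ℕ → ℕ) (i k : ℕ) : ℕ :=
  if k < l then lastRow n h (Ooff h i + k) + 1 - i else 0

section CanonicalFilling

variable {n l : ℕ} {h : ℕ → ℕ}

lemma canonicalFilling_of_le {i k : ℕ} (hk : l ≤ k) : canonicalFilling n l h i k = 0 :=
  if_neg (by omega)

lemma canonicalFilling_column {i j : ℕ} (hij : Ooff h i ≤ j) (hj : j < Ooff h i + l) :
    canonicalFilling n l h i (j - Ooff h i) = lastRow n h j + 1 - i := by
  rw [canonicalFilling, if_pos (by omega), Nat.add_sub_cancel' hij]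

variable (hpos : ∀ i, 0 < ∑ j ∈ range n, h (i + j))
include hpos

lemma canonicalFilling_pos {i k : ℕ} (hk : k < l) : 0 < canonicalFilling n l h i k := by
  have := (le_lastRow_iff hpos (i := i) (j := Ooff h i + k)).2 (by omega)
  simp only [canonicalFilling, hk, if_true]
  omega

lemma canonicalFilling_le (hiv : ∀ i, l ≤ ∑ j ∈ range n, h (i + j)) (i k : ℕ) :
    canonicalFilling n l h i k ≤ n := by
  unfold canonicalFilling
  split_ifs with hk
  · have := lastRow_lt_add hpos hiv (show Ooff h i + k < Ooff h i + l by omega)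
    omega
  · exact Nat.zero_le n

lemma canonicalFilling_mono {i k : ℕ} (hk : k + 1 < l) :
    canonicalFilling n l h i k ≤ canonicalFilling n l h i (k + 1) := by
  have := lastRow_mono hpos (show Ooff h i + k ≤ Ooff h i + (k + 1) by omega)
  simp only [canonicalFilling, hk, show k < l by omega, if_true]
  omega

lemma canonicalFilling_eq_one {i k : ℕ} (hk : k < h i) (hkl : k < l) :
    canonicalFilling n l h i k = 1 := by
  simp only [canonicalFilling, hkl, if_true, lastRow_Ooff_add hpos hk]
  omega

lemma canonicalFilling_colsStrict :
    InfColsStrict (Ooff h) (fun _ => l) (canonicalFilling n l h) := by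
  intro i j hj₁ hj₂ hj₃ hj₄
  rw [canonicalFilling_column hj₁ hj₂, canonicalFilling_column hj₃ hj₄]
  have := (le_lastRow_iff hpos).2 hj₁
  omega

lemma canonicalFilling_nonmovable (hhl : ∀ i, h i ≤ l) :
    InfNonmovable (Ooff h) (fun _ => l) (canonicalFilling n l h) := by
  refine ⟨⟨fun i k hk => canonicalFilling_mono hpos hk, canonicalFilling_colsStrict hpos⟩, ?_⟩
  rintro (_ | i) (hl : 0 < l) ⟨hOpos, hskew, -, hcols⟩
  · simp [Ooff] at hOpos
  have hOi := Ooff_succ h i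
  have hhi : 0 < h i := by
    have := (hskew i).1
    simp only [InfShift, if_neg i.succ_ne_self.symm, if_true] at this
    omega
  -- the box of row `i + 1`, moved one column to the left, would sit above an entry `1` of row `i`
  have hmoved := hcols i (Ooff h (i + 1) - 1)
  simp only [InfShift, if_neg i.succ_ne_self.symm, if_true, le_refl, Nat.sub_self] at hmoved
  rw [show Ooff h (i + 1) - 1 - Ooff h i = h i - 1 by omega,
    canonicalFilling_eq_one hpos (i := i) (k := h i - 1) (by omega) (by have := hhl i; omega)]
    at hmoved
  have := canonicalFilling_pos hpos (h := h) (i := i + 1) hl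
  have := hhl i
  have := hmoved trivial (by omega) (by omega) (by omega)
  omega

lemma canonicalFilling_mem_NMTinf (hiv : ∀ i, l ≤ ∑ j ∈ range n, h (i + j))
    (hhl : ∀ i, h i ≤ l) : canonicalFilling n l h ∈ NMTinf n l h :=
  ⟨⟨fun _ _ => canonicalFilling_pos hpos, fun _ _ => canonicalFilling_of_le⟩,
    canonicalFilling_le hpos hiv, canonicalFilling_nonmovable hpos hhl⟩

lemma isPath_canonicalFilling (hiv : ∀ i, l ≤ ∑ j ∈ range n, h (i + j)) :
    IsPath n l (canonicalFilling n l h) := fun _ =>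
  ⟨fun _ hk => canonicalFilling_mono hpos hk,
    fun _ hk => ⟨canonicalFilling_pos hpos hk, canonicalFilling_le hpos hiv _ _⟩,
    fun _ hk => canonicalFilling_of_le hk⟩

lemma locEnergy_canonicalFilling (hhl : ∀ i, h i ≤ l) :
    locEnergy l (canonicalFilling n l h) = h := by
  funext i
  apply le_antisymm
  · refine Hl_le_of_lt_shift (hhl i) fun k hk => ?_
    have hrow : Ooff h i + (k + h i) = Ooff h (i + 1) + k := by rw [Ooff_succ]; omega
    have := (le_lastRow_iff hpos (i := i + 1)).2 (Nat.le_add_right (Ooff h (i + 1)) k)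
    simp only [canonicalFilling, hk, show k < l by omega, if_true, hrow]
    omega
  · have hones := le_countLE_of_lt_le (x := canonicalFilling n l h i) (c := 1) (hhl i)
      fun k hk => (canonicalFilling_eq_one hpos hk (by have := hhl i; omega)).le
    have hstep :=
      countLE_succ_le_Hl_add l (canonicalFilling n l h (i + 1)) (canonicalFilling n l h i) 0
    rw [countLE_zero_of_pos fun k hk => canonicalFilling_pos hpos hk, add_zero] at hstep
    exact hones.trans hstep

end CanonicalFilling

theorem image_of_local_energy_tfae_general (n l : ℕ) (hl : 1 ≤ l)
    (h : ℕ → ℕ) (hhl : ∀ i, h i ≤ l) :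
    List.TFAE
      [ (∃ s : ℕ → ℕ → ℕ, IsPath n l s ∧ locEnergy l s = h),
        (∃ f, f ∈ NMTinf n l h),
        (∀ j : ℕ, ({i : ℕ | Ooff h i ≤ j ∧ j < Ooff h i + l}).Finite ∧
          ({i : ℕ | Ooff h i ≤ j ∧ j < Ooff h i + l}).ncard ≤ n),
        (∀ i : ℕ, l ≤ ∑ j ∈ Finset.range n, h (i + j)) ] := by
  tfae_have 1 → 4 := fun ⟨_, hs, hE⟩ => hE ▸ le_sum_locEnergy_of_isPath hs
  tfae_have 2 → 4 := fun ⟨_, hfill, hle, ⟨_, hcols⟩, _⟩ => le_sum_of_colsStrict hfill hle hcols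
  tfae_have 3 → 4 := le_sum_of_ncard_column_le
  have hpos (hiv : ∀ i, l ≤ ∑ j ∈ range n, h (i + j)) i : 0 < ∑ j ∈ range n, h (i + j) :=
    lt_of_lt_of_le hl (hiv i)
  tfae_have 4 → 3 := fun hiv => ncard_column_le (hpos hiv) hiv
  tfae_have 4 → 2 := fun hiv => ⟨_, canonicalFilling_mem_NMTinf (hpos hiv) hiv hhl⟩
  tfae_have 4 → 1 := fun hiv =>
    ⟨_, isPath_canonicalFilling (hpos hiv) hiv, locEnergy_canonicalFilling (hpos hiv) hhl⟩
  tfae_finish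

/-- For `h ∈ {0,…,l}^ℕ` the following are equivalent:
(i) `h` is in the image of the local energy map `ρ`;
(ii) there is a nonmovable tableau of shape `κ̃(h)` with entries in `{1,…,n}`;
(iii) every column of `κ̃(h)` contains at most `n` boxes;
(iv) `h_i + ⋯ + h_{i+n-1} ≥ l` for every `i`. -/
theorem image_of_local_energy_tfae (n l : ℕ) (hn : 2 ≤ n) (hl : 1 ≤ l)
    (h : ℕ → ℕ) (hhl : ∀ i, h i ≤ l) :
    List.TFAE
      [ (∃ s : ℕ → ℕ → ℕ, IsPath n l s ∧ locEnergy l s = h),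
        (∃ f, f ∈ NMTinf n l h),
        (∀ j : ℕ, ({i : ℕ | Ooff h i ≤ j ∧ j < Ooff h i + l}).Finite ∧
          ({i : ℕ | Ooff h i ≤ j ∧ j < Ooff h i + l}).ncard ≤ n),
        (∀ i : ℕ, l ≤ ∑ j ∈ Finset.range n, h (i + j)) ] :=
  image_of_local_energy_tfae_general n l hl h hhl
end

section
/- Fix n ≥ 2, l ≥ 1 and K = (k_i) ∈ 𝒦_l. Then: (i) ρ(s^{(K)}) = K, that is, H_l(s^{(K)}_{i+1}, s^{(K)}_i) = k_i for every i ≥ 1 (in particular K ∈ Sp_K); and (ii) for every s ∈ B_l^ℕ, s ≈ s^{(K)} if and only if ρ(s) ≈ K. -/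
/-- `K ∈ 𝒦_l`: an `n`-periodic sequence of nonnegative integers with
`k_1 + ⋯ + k_n = l` (0-indexed). -/
def IsKseq (n l : ℕ) (K : ℕ → ℕ) : Prop :=
  (∀ i, K (i + n) = K i) ∧ (∑ i ∈ Finset.range n, K i = l)

/-- partial sums `k_i + k_{i+1} + ⋯ + k_{i+a-1}`. -/
def Psum (K : ℕ → ℕ) (i a : ℕ) : ℕ := ∑ j ∈ Finset.range a, K (i + j)

/-- the ground-state path `s^{(K)}`: row `i` consists of `k_i` entries `1`,
`k_{i+1}` entries `2`, …, `k_{i+n-1}` entries `n`. -/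
def gsPath (n l : ℕ) (K : ℕ → ℕ) : ℕ → ℕ → ℕ :=
  fun i k => if k < l then
      1 + ((Finset.range n).filter (fun a => Psum K i (a + 1) ≤ k)).card
    else 0

/-- `a ≈ b`: the sequences differ in only finitely many places. -/
def FinDiff {α : Type*} (a b : ℕ → α) : Prop := ({i | a i ≠ b i}).Finite

/-- the spectrum `Sp_K = ρ(S_K)`. -/
def SpSet (n l : ℕ) (K : ℕ → ℕ) : Set (ℕ → ℕ) :=
  {h | ∃ s : ℕ → ℕ → ℕ, IsPath n l s ∧ FinDiff s (gsPath n l K) ∧ locEnergy l s = h}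

namespace GroundAux

/-- counting function: number of entries `≥ t` among the first `l`. -/
def G (l : ℕ) (a : ℕ → ℕ) (t : ℕ) : ℕ :=
  ((Finset.range l).filter (fun k => t ≤ a k)).card

lemma psum_mono (K : ℕ → ℕ) (i : ℕ) {a b : ℕ} (h : a ≤ b) :
    Psum K i a ≤ Psum K i b :=
  Finset.sum_le_sum_of_subset (Finset.range_subset_range.mpr h)

lemma psum_shift (K : ℕ → ℕ) (i a : ℕ) :
    Psum K i (a + 1) = K i + Psum K (i + 1) a := by
  unfold Psum
  rw [Finset.sum_range_succ']
  have : ∀ j, K (i + (j + 1)) = K (i + 1 + j) := fun j => by ring_nf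
  simp only [this, add_zero]
  ring

lemma psum_n {n l : ℕ} {K : ℕ → ℕ} (hK : IsKseq n l K) (i : ℕ) :
    Psum K i n = l := by
  induction i with
  | zero => simpa [Psum] using hK.2
  | succ i ih =>
    have h1 : Psum K i (n + 1) = K i + Psum K (i + 1) n := psum_shift K i n
    have h2 : Psum K i (n + 1) = Psum K i n + K (i + n) :=
      Finset.sum_range_succ _ n
    have := hK.1 i
    omega

lemma gs_ge {n l : ℕ} (K : ℕ → ℕ) {i k m : ℕ} (hk : k < l) (hm : m ≤ n) :
    m + 1 ≤ gsPath n l K i k ↔ Psum K i m ≤ k := by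
  simp only [gsPath, if_pos hk]
  constructor
  · intro h
    by_contra hc
    push_neg at hc
    have hm1 : 1 ≤ m := by
      rcases Nat.eq_zero_or_pos m with h0 | h1
      · subst h0; simp [Psum] at hc
      · exact h1
    have hsub : (Finset.range n).filter (fun a => Psum K i (a + 1) ≤ k)
        ⊆ Finset.range (m - 1) := by
      intro a ha
      simp only [Finset.mem_filter, Finset.mem_range] at ha ⊢
      by_contra hge
      push_neg at hge
      have := psum_mono K i (show m ≤ a + 1 by omega)
      omega
    have := Finset.card_le_card hsub
    simp only [Finset.card_range] at this
    omega
  · intro h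
    have hsub : Finset.range m
        ⊆ (Finset.range n).filter (fun a => Psum K i (a + 1) ≤ k) := by
      intro a ha
      simp only [Finset.mem_range] at ha
      simp only [Finset.mem_filter, Finset.mem_range]
      exact ⟨lt_of_lt_of_le ha hm,
        le_trans (psum_mono K i (show a + 1 ≤ m by omega)) h⟩
    have := Finset.card_le_card hsub
    simp only [Finset.card_range] at this
    omega

lemma gs_le_n {n l : ℕ} {K : ℕ → ℕ} (hn : 1 ≤ n) (hK : IsKseq n l K)
    {i k : ℕ} (hk : k < l) : gsPath n l K i k ≤ n := by
  simp only [gsPath, if_pos hk]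
  have hsub : (Finset.range n).filter (fun a => Psum K i (a + 1) ≤ k)
      ⊆ Finset.range (n - 1) := by
    intro a ha
    simp only [Finset.mem_filter, Finset.mem_range] at ha ⊢
    rcases ha with ⟨han, hap⟩
    by_contra hge
    push_neg at hge
    have ha1 : a + 1 = n := by omega
    rw [ha1, psum_n hK i] at hap
    omega
  have := Finset.card_le_card hsub
  simp only [Finset.card_range] at this
  omega

lemma isPath_gs {n l : ℕ} {K : ℕ → ℕ} (hn : 1 ≤ n) (hK : IsKseq n l K) :
    IsPath n l (gsPath n l K) := by
  intro i
  refine ⟨?_, ?_, ?_⟩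
  · intro k hk1
    simp only [gsPath, if_pos (show k < l by omega), if_pos hk1]
    have : (Finset.range n).filter (fun a => Psum K i (a + 1) ≤ k)
        ⊆ (Finset.range n).filter (fun a => Psum K i (a + 1) ≤ k + 1) := by
      intro x hx
      simp only [Finset.mem_filter] at hx ⊢
      exact ⟨hx.1, by omega⟩
    have := Finset.card_le_card this
    omega
  · intro k hk
    exact ⟨by simp [gsPath, if_pos hk], gs_le_n hn hK hk⟩
  · intro k hk
    simp [gsPath, Nat.not_lt.mpr hk]

lemma G_gs {n l : ℕ} {K : ℕ → ℕ} (hK : IsKseq n l K) {i t : ℕ}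
    (h1 : 1 ≤ t) (h2 : t ≤ n + 1) :
    G l (gsPath n l K i) t = l - Psum K i (t - 1) := by
  obtain ⟨m, rfl⟩ : ∃ m, t = m + 1 := ⟨t - 1, by omega⟩
  have hm : m ≤ n := by omega
  have hset : (Finset.range l).filter (fun k => m + 1 ≤ gsPath n l K i k)
      = Finset.Ico (Psum K i m) l := by
    ext k
    simp only [Finset.mem_filter, Finset.mem_range, Finset.mem_Ico]
    constructor
    · rintro ⟨hk, ht⟩
      exact ⟨(gs_ge K hk hm).mp ht, hk⟩
    · rintro ⟨hp, hk⟩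
      exact ⟨hk, (gs_ge K hk hm).mpr hp⟩
  rw [G, hset, Nat.card_Ico]
  simp

lemma cut (l t : ℕ) (a b : ℕ → ℕ) (σ : Equiv.Perm (Fin l)) :
    G l a t ≤ (∑ k : Fin l, H1 (a k) (b (σ k))) + G l b (t + 1) := by
  have hG : ∀ (c : ℕ → ℕ) (u : ℕ),
      G l c u = ∑ k : Fin l, (if u ≤ c (k : ℕ) then 1 else 0) := by
    intro c u
    rw [G, Finset.card_filter, ← Fin.sum_univ_eq_sum_range]
  rw [hG, hG]
  have hb : ∑ k : Fin l, (if t + 1 ≤ b (k : ℕ) then (1 : ℕ) else 0)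
      = ∑ k : Fin l, (if t + 1 ≤ b ((σ k : Fin l) : ℕ) then 1 else 0) :=
    (Equiv.sum_comp σ (fun k : Fin l => if t + 1 ≤ b (k : ℕ) then (1 : ℕ) else 0)).symm
  rw [hb, ← Finset.sum_add_distrib]
  apply Finset.sum_le_sum
  intro k _
  unfold H1
  split_ifs <;> omega

lemma le_Hl (l t : ℕ) (a b : ℕ → ℕ) :
    G l a t ≤ Hl l a b + G l b (t + 1) := by
  obtain ⟨σ, -, hσ⟩ := Finset.exists_mem_eq_inf'
    (⟨1, Finset.mem_univ _⟩ : (Finset.univ : Finset (Equiv.Perm (Fin l))).Nonempty)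
    (fun σ : Equiv.Perm (Fin l) => ∑ i : Fin l, H1 (a i) (b (σ i)))
  rw [Hl, hσ]
  exact cut l t a b σ

lemma Hl_le (l : ℕ) (a b : ℕ → ℕ) (σ : Equiv.Perm (Fin l)) :
    Hl l a b ≤ ∑ k : Fin l, H1 (a k) (b (σ k)) :=
  Finset.inf'_le _ (Finset.mem_univ σ)

lemma K_le_l {n l : ℕ} {K : ℕ → ℕ} (hn : 1 ≤ n) (hK : IsKseq n l K) (i : ℕ) :
    K i ≤ l := by
  have h1 : Psum K i 1 ≤ Psum K i n := psum_mono K i hn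
  have : Psum K i 1 = K i := by simp [Psum]
  rw [psum_n hK i] at h1
  omega

lemma psum_pred {n l : ℕ} {K : ℕ → ℕ} (hn : 1 ≤ n) (hK : IsKseq n l K) (i : ℕ) :
    K i + Psum K (i + 1) (n - 1) = l := by
  have := psum_shift K i (n - 1)
  rw [show n - 1 + 1 = n by omega, psum_n hK i] at this
  omega

lemma Hl_gs {n l : ℕ} {K : ℕ → ℕ} (hn : 2 ≤ n) (hl : 1 ≤ l)
    (hK : IsKseq n l K) (i : ℕ) :
    Hl l (gsPath n l K (i + 1)) (gsPath n l K i) = K i := by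
  have hn1 : 1 ≤ n := by omega
  have hKl : K i ≤ l := K_le_l hn1 hK i
  -- lower bound
  have hlow : K i ≤ Hl l (gsPath n l K (i + 1)) (gsPath n l K i) := by
    have h1 := le_Hl l n (gsPath n l K (i + 1)) (gsPath n l K i)
    have hGa : G l (gsPath n l K (i + 1)) n = K i := by
      rw [G_gs hK hn1 (by omega)]
      have := psum_pred hn1 hK i
      omega
    have hGb : G l (gsPath n l K i) (n + 1) = 0 := by
      rw [G_gs hK (by omega) (by omega)]
      simp [psum_n hK i]
    rw [hGa, hGb] at h1
    omega
  -- upper bound via rotation by K i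
  haveI : NeZero l := ⟨by omega⟩
  set c : Fin l := ⟨K i % l, Nat.mod_lt _ (by omega)⟩ with hc
  have hterm : ∀ k : Fin l,
      H1 (gsPath n l K (i + 1) (k : ℕ)) (gsPath n l K i ((Equiv.addRight c k : Fin l) : ℕ))
      = if l ≤ (k : ℕ) + K i then 1 else 0 := by
    intro k
    have hkl : (k : ℕ) < l := k.isLt
    have hval : ((Equiv.addRight c k : Fin l) : ℕ) = ((k : ℕ) + K i) % l := by
      show ((k + c : Fin l) : ℕ) = _
      rw [Fin.add_def]
      simp only [hc]
      conv_rhs => rw [Nat.add_mod]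
      rw [Nat.mod_eq_of_lt hkl]
    rw [hval]
    by_cases hcase : (k : ℕ) + K i < l
    · rw [if_neg (by omega), Nat.mod_eq_of_lt hcase]
      set v := gsPath n l K (i + 1) (k : ℕ) with hv
      have hvb : 1 ≤ v ∧ v ≤ n := (isPath_gs hn1 hK (i + 1)).2.1 _ hkl
      have h1 : Psum K (i + 1) (v - 1) ≤ (k : ℕ) := by
        have := (gs_ge (i := i + 1) K hkl (show v - 1 ≤ n by omega)).mp
          (by omega)
        exact this
      have h2 : Psum K i v ≤ (k : ℕ) + K i := by
        have := psum_shift K i (v - 1)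
        rw [show v - 1 + 1 = v by omega] at this
        omega
      have h3 : v + 1 ≤ gsPath n l K i ((k : ℕ) + K i) :=
        (gs_ge K hcase (by omega)).mpr h2
      unfold H1
      rw [if_pos (by omega)]
    · rw [if_pos (by omega)]
      have hmod : ((k : ℕ) + K i) % l = (k : ℕ) + K i - l := by
        rw [Nat.mod_eq_sub_mod (by omega), Nat.mod_eq_of_lt (by omega)]
      rw [hmod]
      have hj : (k : ℕ) + K i - l < l := by omega
      have hga : n ≤ gsPath n l K (i + 1) (k : ℕ) := by
        have hp : Psum K (i + 1) (n - 1) ≤ (k : ℕ) := by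
          have := psum_pred hn1 hK i
          omega
        have := (gs_ge (i := i + 1) K hkl (show n - 1 ≤ n by omega)).mpr hp
        omega
      have hgb : gsPath n l K i ((k : ℕ) + K i - l) ≤ n := gs_le_n hn1 hK hj
      unfold H1
      rw [if_neg (by omega)]
  have hup : Hl l (gsPath n l K (i + 1)) (gsPath n l K i) ≤ K i := by
    refine le_trans (Hl_le l _ _ (Equiv.addRight c)) ?_
    rw [Finset.sum_congr rfl (fun k _ => hterm k)]
    rw [Fin.sum_univ_eq_sum_range (fun k => if l ≤ k + K i then 1 else 0) l]
    rw [← Finset.card_filter]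
    have hset : (Finset.range l).filter (fun k => l ≤ k + K i)
        = Finset.Ico (l - K i) l := by
      ext k
      simp only [Finset.mem_filter, Finset.mem_range, Finset.mem_Ico]
      omega
    rw [hset, Nat.card_Ico]
    omega
  omega

lemma row_mono {n l : ℕ} {a : ℕ → ℕ} (h : IsBRow n l a) :
    ∀ k k', k ≤ k' → k' < l → a k ≤ a k' := by
  intro k k' hk
  induction hk with
  | refl => intro _; exact le_rfl
  | step _ ih =>
    rename_i m _
    intro hlt
    exact le_trans (ih (by omega)) (h.1 m hlt)

lemma row_le_of_G {n l : ℕ} {a b : ℕ → ℕ} (ha : IsBRow n l a) (hb : IsBRow n l b)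
    (h : ∀ t, 1 ≤ t → t ≤ n → G l b t ≤ G l a t) :
    ∀ k, k < l → b k ≤ a k := by
  intro k hk
  by_contra hc
  push_neg at hc
  have ht : 1 ≤ b k ∧ b k ≤ n := hb.2.1 k hk
  have h1 : Finset.Ico k l ⊆ (Finset.range l).filter (fun k' => b k ≤ b k') := by
    intro k' hk'
    simp only [Finset.mem_Ico] at hk'
    simp only [Finset.mem_filter, Finset.mem_range]
    exact ⟨hk'.2, row_mono hb k k' hk'.1 hk'.2⟩
  have h2 : (Finset.range l).filter (fun k' => b k ≤ a k') ⊆ Finset.Ico (k + 1) l := by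
    intro k' hk'
    simp only [Finset.mem_filter, Finset.mem_range] at hk'
    simp only [Finset.mem_Ico]
    refine ⟨?_, hk'.1⟩
    by_contra hle
    push_neg at hle
    have := row_mono ha k' k (by omega) hk
    omega
  have c1 := Finset.card_le_card h1
  have c2 := Finset.card_le_card h2
  rw [Nat.card_Ico] at c1 c2
  have h3 := h (b k) ht.1 ht.2
  unfold G at h3
  omega

lemma row_eq_of_G {n l : ℕ} {a b : ℕ → ℕ} (ha : IsBRow n l a) (hb : IsBRow n l b)
    (h : ∀ t, 1 ≤ t → t ≤ n → G l a t = G l b t) : a = b := by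
  funext k
  by_cases hk : k < l
  · exact le_antisymm
      (row_le_of_G hb ha (fun t h1 h2 => (h t h1 h2).le) k hk)
      (row_le_of_G ha hb (fun t h1 h2 => (h t h1 h2).ge) k hk)
  · rw [ha.2.2 k (by omega), hb.2.2 k (by omega)]

lemma G_one {n l : ℕ} {a : ℕ → ℕ} (ha : IsBRow n l a) : G l a 1 = l := by
  unfold G
  rw [Finset.filter_true_of_mem, Finset.card_range]
  intro k hk
  exact (ha.2.1 k (Finset.mem_range.mp hk)).1

lemma G_top {n l : ℕ} {a : ℕ → ℕ} (ha : IsBRow n l a) : G l a (n + 1) = 0 := by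
  unfold G
  rw [Finset.card_eq_zero, Finset.filter_eq_empty_iff]
  intro k hk
  have := (ha.2.1 k (Finset.mem_range.mp hk)).2
  omega

lemma gid {n l : ℕ} {K : ℕ → ℕ} (hn : 1 ≤ n) (hK : IsKseq n l K)
    {i t : ℕ} (h1 : 1 ≤ t) (h2 : t ≤ n) :
    G l (gsPath n l K (i + 1)) t = K i + G l (gsPath n l K i) (t + 1) := by
  rw [G_gs hK h1 (by omega), G_gs hK (by omega) (by omega)]
  have hs : Psum K i t = K i + Psum K (i + 1) (t - 1) := by
    have := psum_shift K i (t - 1)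
    rw [show t - 1 + 1 = t by omega] at this
    exact this
  have hle : Psum K i t ≤ l := by
    have := psum_mono K i h2
    rw [psum_n hK i] at this
    omega
  simp only [show t + 1 - 1 = t from rfl]
  omega

lemma tail_eq {n l : ℕ} {K : ℕ → ℕ} (hn : 2 ≤ n) (hl : 1 ≤ l)
    (hK : IsKseq n l K) (s : ℕ → ℕ → ℕ) (hs : IsPath n l s) (N : ℕ)
    (hE : ∀ i, N ≤ i → Hl l (s (i + 1)) (s i) = K i) :
    ∀ i, N + n ≤ i → s i = gsPath n l K i := by
  have hn1 : 1 ≤ n := by omega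
  have hgs := isPath_gs hn1 hK
  have cutE : ∀ i, N ≤ i → ∀ t, G l (s (i + 1)) t ≤ K i + G l (s i) (t + 1) := by
    intro i hi t
    have := le_Hl l t (s (i + 1)) (s i)
    rw [hE i hi] at this
    omega
  have lower : ∀ t, 1 ≤ t → t ≤ n + 1 → ∀ i, N ≤ i →
      G l (gsPath n l K i) t ≤ G l (s i) t := by
    intro t
    induction t with
    | zero => omega
    | succ t ih =>
      intro h1 h2 i hi
      rcases Nat.eq_zero_or_pos t with rfl | ht
      · rw [G_one (hgs i), G_one (hs i)]
      · have hgi := gid hn1 hK (i := i) ht (by omega)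
        have hih := ih ht (by omega) (i + 1) (by omega)
        have hcut := cutE i hi t
        omega
  have upper : ∀ d, d ≤ n → ∀ t, t + d = n + 1 → ∀ i, N + d ≤ i →
      G l (s i) t ≤ G l (gsPath n l K i) t := by
    intro d
    induction d with
    | zero =>
      intro _ t htd i _
      rw [show t = n + 1 by omega, G_top (hs i), G_top (hgs i)]
    | succ d ih =>
      intro hd t htd i hi
      obtain ⟨j, rfl⟩ : ∃ j, i = j + 1 := ⟨i - 1, by omega⟩
      have ht1 : 1 ≤ t := by omega
      have hcut := cutE j (by omega) t
      have hih := ih (by omega) (t + 1) (by omega) j (by omega)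
      have hgi := gid hn1 hK (i := j) ht1 (by omega)
      omega
  intro i hi
  refine row_eq_of_G (hs i) (hgs i) ?_
  intro t h1 h2
  refine le_antisymm (upper (n + 1 - t) (by omega) t (by omega) i (by omega))
    (lower t h1 (by omega) i (by omega))

lemma finDiff_bound {α : Type*} {a b : ℕ → α} (h : FinDiff a b) :
    ∃ N, ∀ i, N ≤ i → a i = b i := by
  obtain ⟨M, hM⟩ := h.bddAbove
  refine ⟨M + 1, fun i hi => ?_⟩
  by_contra hne
  have := hM (show i ∈ {i | a i ≠ b i} from hne)
  omega

lemma finDiff_of_bound {α : Type*} {a b : ℕ → α} (N : ℕ)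
    (h : ∀ i, N ≤ i → a i = b i) : FinDiff a b := by
  apply Set.Finite.subset (Set.finite_Iio N)
  intro i hi
  simp only [Set.mem_setOf_eq] at hi
  simp only [Set.mem_Iio]
  by_contra hge
  exact hi (h i (by omega))

end GroundAux

/-- (i) `ρ(s^{(K)}) = K`, i.e. `H_l(s^{(K)}_{i+1}, s^{(K)}_i) = k_i`
for all `i`; in particular `K ∈ Sp_K`.  (ii) For a path `s ∈ B_l^ℕ`,
`s ≈ s^{(K)}` iff `ρ(s) ≈ K`. -/
theorem ground_state_lemma (n l : ℕ) (hn : 2 ≤ n) (hl : 1 ≤ l)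
    (K : ℕ → ℕ) (hK : IsKseq n l K) :
    (locEnergy l (gsPath n l K) = K) ∧ (K ∈ SpSet n l K) ∧
    (∀ s : ℕ → ℕ → ℕ, IsPath n l s →
      (FinDiff s (gsPath n l K) ↔ FinDiff (locEnergy l s) K)) := by
  open GroundAux in
  have hgs : IsPath n l (gsPath n l K) := isPath_gs (by omega) hK
  have hE : locEnergy l (gsPath n l K) = K :=
    funext (fun i => Hl_gs hn hl hK i)
  refine ⟨hE, ⟨gsPath n l K, hgs, ?_, hE⟩, ?_⟩
  · exact GroundAux.finDiff_of_bound 0 (fun i _ => rfl)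
  · intro s hs
    constructor
    · intro hfd
      obtain ⟨N, hN⟩ := GroundAux.finDiff_bound hfd
      apply GroundAux.finDiff_of_bound N
      intro i hi
      show Hl l (s (i + 1)) (s i) = K i
      rw [hN (i + 1) (by omega), hN i hi]
      exact GroundAux.Hl_gs hn hl hK i
    · intro hfd
      obtain ⟨N, hN⟩ := GroundAux.finDiff_bound hfd
      exact GroundAux.finDiff_of_bound (N + n)
        (GroundAux.tail_eq hn hl hK s hs N (fun i hi => hN i hi))
end

section
/- Let λ be a partition with at most m parts, μ a composition of length m with |μ| = |λ|, and ν ∈ ℤ_{≥0}^{m−1} with ν_i + μ_i ≥ μ_{i+1} for all 1 ≤ i ≤ m−1. Then for every T ∈ SST(λ,μ) the filling θ_ν(T) is a Littlewood–Richardson tableau of shape Sh_ν(μ) and content λ, and θ_ν defines a bijection from SST(λ,μ) onto LR(Sh_ν(μ), λ). -/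
def EntriesLE (n : ℕ) (f : ℕ → ℕ → ℕ) : Prop := ∀ i k, f i k ≤ n

def rowCount (len : ℕ → ℕ) (f : ℕ → ℕ → ℕ) (i v : ℕ) : ℕ :=
  ((Finset.range (len i)).filter (fun k => f i k = v)).card

/-- the number of entries of `f` equal to `v`. -/
def content (m : ℕ) (len : ℕ → ℕ) (f : ℕ → ℕ → ℕ) (v : ℕ) : ℕ :=
  ∑ i ∈ Finset.range m, rowCount len f i v

/-- the reading word of a tableau: rows top to bottom, each read right to left. -/
def word (m : ℕ) (len : ℕ → ℕ) (f : ℕ → ℕ → ℕ) : List ℕ :=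
  (List.range m).flatMap (fun i => ((List.range (len i)).reverse.map (f i)))

/-- a lattice word: every initial segment contains at least as many `i`'s as `(i+1)`'s. -/
def IsLatticeWord (w : List ℕ) : Prop :=
  ∀ p v : ℕ, (w.take p).count (v + 2) ≤ (w.take p).count (v + 1)

/-- a Littlewood–Richardson tableau: rows weakly increasing, lattice reading word. -/
def IsLR (m : ℕ) (len : ℕ → ℕ) (f : ℕ → ℕ → ℕ) : Prop :=
  RowsWeak m len f ∧ IsLatticeWord (word m len f)

/-- LR tableaux of the given shape and content `η` (not necessarily semistandard). -/
def LRset (m : ℕ) (len : ℕ → ℕ) (η : ℕ → ℕ) : Set (ℕ → ℕ → ℕ) :=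
  {f | IsFilling m len f ∧ IsLR m len f ∧ ∀ v, content m len f (v + 1) = η v}

/-- `LR₀(A,η)`: nonmovable LR tableaux of shape `A` and content `η`. -/
def LR0set (m : ℕ) (off len : ℕ → ℕ) (η : ℕ → ℕ) : Set (ℕ → ℕ → ℕ) :=
  {f | IsFilling m len f ∧ IsLR m len f ∧ Nonmovable m off len f ∧
    ∀ v, content m len f (v + 1) = η v}

/-- semistandard tableaux of the given shape and content `μ`. -/
def SSTset (m : ℕ) (off len : ℕ → ℕ) (μ : ℕ → ℕ) : Set (ℕ → ℕ → ℕ) :=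
  {f | IsFilling m len f ∧ Semistandard m off len f ∧
    ∀ v, content m len f (v + 1) = μ v}

/-- offsets of the rows of `Sh_ν(μ)` (`ν` 0-indexed: `nu r = ν_{r+1}`):
row `r` (from the top) has offset `ν_{r+1} + ⋯ + ν_{m-1}`. -/
def shOff (m : ℕ) (nu : ℕ → ℕ) : ℕ → ℕ := fun r => ∑ j ∈ Finset.Ico r (m - 1), nu j

/-- the number of entries equal to `v` in the first `r` rows of `f`. -/
def cntRows (len : ℕ → ℕ) (f : ℕ → ℕ → ℕ) (v r : ℕ) : ℕ :=
  ∑ i ∈ Finset.range r, rowCount len f i v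

/-- the map `θ`: row `k` (from the top, 0-indexed) of `θ(T)` lists, in weakly
increasing order, the (1-indexed) indices of the rows of `T` containing the
entry `k+1`. -/
def theta (m : ℕ) (len : ℕ → ℕ) (μ : ℕ → ℕ) (f : ℕ → ℕ → ℕ) : ℕ → ℕ → ℕ :=
  fun k b => if k < m ∧ b < μ k then
      1 + ((Finset.range m).filter (fun r => cntRows len f (k + 1) (r + 1) ≤ b)).card
    else 0

/-!
Write `c(i, v)` for the number of entries `v + 1` in row `i` of a filling. The map `θ` transposes
this matrix of multiplicities, and a weakly increasing row is determined by its multiplicities, so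
`θ` and the `θ` with the roles of `λ` and `μ` exchanged are mutually inverse on fillings with weakly
increasing rows.

Since each row of a filling with weakly increasing rows is read as a weakly decreasing block, its
reading word is a lattice word iff for all `v` and `i` the rows `0, …, i` contain at most as many
`v + 2`'s as the rows `0, …, i - 1` contain `v + 1`'s. Transposed by `θ`, this says that row `v + 1`
of the tableau has at most as many entries `≤ i + 1` as row `v` has entries `≤ i`; for weakly increasing,
left-justified rows this is exactly strict increase down the columns.
-/

namespace LRBijection

open Finset

section Rows

variable {g g' : ℕ → ℕ} {L L' m : ℕ}

def countEq (g : ℕ → ℕ) (x L : ℕ) : ℕ := #{k ∈ range L | g k = x}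

def countLE (g : ℕ → ℕ) (w L : ℕ) : ℕ := #{k ∈ range L | g k ≤ w}

lemma monotoneOn_Iio_of_le_succ (hg : ∀ k, k + 1 < L → g k ≤ g (k + 1)) :
    MonotoneOn g (Set.Iio L) :=
  monotoneOn_of_le_succ Set.ordConnected_Iio fun k _ _ hk => by
    simpa [Order.succ_eq_add_one] using hg k (by simpa [Order.succ_eq_add_one] using hk)

lemma le_iff_lt_countLE (hg : MonotoneOn g (Set.Iio L)) {j : ℕ} (hj : j < L) (w : ℕ) :
    g j ≤ w ↔ j < countLE g w L := by
  constructor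
  · intro hw
    have hsub : range (j + 1) ⊆ {k ∈ range L | g k ≤ w} := fun k hk => by
      simp only [mem_range] at hk
      simp only [mem_filter, mem_range]
      exact ⟨by omega, (hg (by simp; omega) hj (by omega)).trans hw⟩
    simpa [countLE] using card_le_card hsub
  · intro hlt
    by_contra! hw
    have hsub : {k ∈ range L | g k ≤ w} ⊆ range j := fun k hk => by
      simp only [mem_filter, mem_range] at hk ⊢
      by_contra! hjk
      have := hg hj hk.1 hjk
      omega
    have := card_le_card hsub
    simp only [card_range, countLE] at this hlt
    omega

lemma countLE_eq_sum_countEq (hpos : ∀ k < L, 0 < g k) (w : ℕ) :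
    countLE g w L = ∑ v ∈ range w, countEq g (v + 1) L := by
  rw [countLE, card_eq_sum_card_fiberwise (f := fun k => g k - 1) (t := range w)
    fun k hk => by
      simp only [coe_filter, Set.mem_ofPred_eq, mem_range, mem_coe] at hk ⊢
      have := hpos k hk.1
      omega]
  refine sum_congr rfl fun v hv => ?_
  rw [countEq, filter_filter]
  refine congrArg card (filter_congr fun k hk => ?_)
  have := hpos k (mem_range.1 hk)
  simp only [mem_range] at hv
  omega

lemma countLE_succ_le_of_lt (hL : L' ≤ L) (hlt : ∀ j < L', g j < g' j) (w : ℕ) :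
    countLE g' (w + 1) L' ≤ countLE g w L :=
  card_le_card fun j hj => by
    simp only [mem_filter, mem_range] at hj ⊢
    have := hlt j hj.1
    omega

lemma lt_of_countLE_succ_le (hg : MonotoneOn g (Set.Iio L)) (hg' : MonotoneOn g' (Set.Iio L'))
    (hpos : ∀ j < L', 0 < g' j) (hbound : ∀ j < L', g' j ≤ m)
    (hcount : ∀ w < m, countLE g' (w + 1) L' ≤ countLE g w L) {j : ℕ} (hj : j < L') :
    g j < g' j := by
  have hg'j := hpos j hj
  have hj' : j < countLE g' (g' j - 1 + 1) L' := by
    rw [Nat.sub_add_cancel hg'j]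
    exact (le_iff_lt_countLE hg' hj _).1 le_rfl
  have hjw : j < countLE g (g' j - 1) L :=
    hj'.trans_le (hcount _ (by have := hbound j hj; omega))
  have hjL : j < L := hjw.trans_le ((card_filter_le _ _).trans_eq (card_range L))
  have := (le_iff_lt_countLE hg hjL _).2 hjw
  omega

end Rows

section SortedRow

variable {c : ℕ → ℕ} {m j : ℕ}

def partialSum (c : ℕ → ℕ) (v : ℕ) : ℕ := ∑ u ∈ range v, c u

/-- The `j`-th entry (from `0`) of the weakly increasing row made of `c v` copies of `v + 1`
for each `v < m`. -/
def sortedRow (m : ℕ) (c : ℕ → ℕ) (j : ℕ) : ℕ := 1 + #{v ∈ range m | partialSum c (v + 1) ≤ j}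

lemma partialSum_mono (c : ℕ → ℕ) : Monotone (partialSum c) :=
  fun _ _ h => sum_le_sum_of_subset (range_subset_range.2 h)

lemma sortedRow_mono (m : ℕ) (c : ℕ → ℕ) : Monotone (sortedRow m c) := fun _ _ h =>
  Nat.add_le_add_left (card_le_card (monotone_filter_right _ fun _ _ hv => hv.trans h)) 1

lemma sortedRow_le_iff (hj : j < partialSum c m) (w : ℕ) :
    sortedRow m c j ≤ w + 1 ↔ j < partialSum c (w + 1) := by
  rw [sortedRow]
  constructor
  · intro h
    by_contra! hw
    have hwm : w + 1 ≤ m := by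
      by_contra!
      have := partialSum_mono c this.le
      omega
    have hsub : range (w + 1) ⊆ {v ∈ range m | partialSum c (v + 1) ≤ j} := fun u hu => by
      simp only [mem_range] at hu
      simp only [mem_filter, mem_range]
      exact ⟨by omega, (partialSum_mono c (by omega)).trans hw⟩
    have := card_le_card hsub
    simp only [card_range] at this
    omega
  · intro h
    have hsub : {v ∈ range m | partialSum c (v + 1) ≤ j} ⊆ range w := fun u hu => by
      simp only [mem_filter, mem_range] at hu ⊢
      by_contra! hwu
      have := partialSum_mono c (show w + 1 ≤ u + 1 by omega)
      omega
    have := card_le_card hsub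
    simp only [card_range] at this
    omega

lemma sortedRow_le (hj : j < partialSum c m) : sortedRow m c j ≤ m := by
  rcases m with _ | m
  · simp [partialSum] at hj
  · exact (sortedRow_le_iff hj m).2 hj

lemma sortedRow_eq_iff (hj : j < partialSum c m) (x : ℕ) :
    sortedRow m c j = x + 1 ↔ partialSum c x ≤ j ∧ j < partialSum c (x + 1) := by
  rw [← sortedRow_le_iff hj]
  rcases x with _ | y
  · simp only [partialSum, range_zero, sum_empty, zero_le, true_and, sortedRow]
    omega
  · have := sortedRow_le_iff hj y
    constructor
    · intro h
      exact ⟨by by_contra!; omega, h.le⟩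
    · rintro ⟨h1, h2⟩
      have : ¬ sortedRow m c j ≤ y + 1 := by rw [this]; omega
      omega

lemma countEq_sortedRow {x : ℕ} (hx : x < m) :
    countEq (sortedRow m c) (x + 1) (partialSum c m) = c x := by
  have hIco : {j ∈ range (partialSum c m) | sortedRow m c j = x + 1} =
      Ico (partialSum c x) (partialSum c (x + 1)) := by
    ext j
    simp only [mem_filter, mem_range, mem_Ico]
    constructor
    · rintro ⟨hj, he⟩
      exact (sortedRow_eq_iff hj x).1 he
    · rintro ⟨h1, h2⟩
      have hj := h2.trans_le (partialSum_mono c hx)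
      exact ⟨hj, (sortedRow_eq_iff hj x).2 ⟨h1, h2⟩⟩
  rw [countEq, hIco, Nat.card_Ico]
  simp only [partialSum, sum_range_succ, Nat.add_sub_cancel_left]

lemma eq_sortedRow_countEq (hg : MonotoneOn g (Set.Iio L)) (hpos : ∀ k < L, 0 < g k)
    (hle : ∀ k < L, g k ≤ m) (hj : j < L) : g j = sortedRow m (fun x => countEq g (x + 1) L) j := by
  have hsum : ∀ w, partialSum (fun x => countEq g (x + 1) L) w = countLE g w L :=
    fun w => (countLE_eq_sum_countEq hpos w).symm
  have hjm : j < partialSum (fun x => countEq g (x + 1) L) m := by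
    rw [hsum, countLE, filter_true_of_mem fun k hk => hle k (mem_range.1 hk), card_range]
    exact hj
  refine eq_of_forall_ge_iff fun w => ?_
  rcases w with _ | w
  · have := hpos j hj
    simp only [sortedRow]
    omega
  · rw [le_iff_lt_countLE hg hj, sortedRow_le_iff hjm, hsum]

end SortedRow

section Lattice

def IsLatticeAt (v : ℕ) (w : List ℕ) : Prop :=
  ∀ p, (w.take p).count (v + 2) ≤ (w.take p).count (v + 1)

variable {v : ℕ} {l : List ℕ}

lemma isLatticeWord_iff_forall_isLatticeAt (w : List ℕ) :
    IsLatticeWord w ↔ ∀ v, IsLatticeAt v w := forall_comm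

lemma IsLatticeAt.count_le (h : IsLatticeAt v l) : l.count (v + 2) ≤ l.count (v + 1) := by
  simpa using h l.length

lemma isLatticeAt_append_singleton (x : ℕ) :
    IsLatticeAt v (l ++ [x]) ↔
      IsLatticeAt v l ∧ (l ++ [x]).count (v + 2) ≤ (l ++ [x]).count (v + 1) := by
  constructor
  · intro h
    refine ⟨fun p => ?_, h.count_le⟩
    have := h (min p l.length)
    rwa [← List.take_take, List.take_left' rfl] at this
  · rintro ⟨hl, hlx⟩ p
    rcases le_or_gt p l.length with hp | hp
    · rw [List.take_append_of_le_length hp]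
      exact hl p
    · rwa [List.take_of_length_le (by simp; omega)]

/-- In a weakly decreasing block all `v + 2`'s precede all `v + 1`'s, so only the prefix
ending with its last `v + 2` can break the lattice condition. -/
lemma isLatticeAt_append_of_pairwise_ge {r : List ℕ} (hr : r.Pairwise (· ≥ ·)) :
    IsLatticeAt v (l ++ r) ↔
      IsLatticeAt v l ∧ l.count (v + 2) + r.count (v + 2) ≤ l.count (v + 1) := by
  induction r generalizing l with
  | nil => simpa using fun h : IsLatticeAt v l => h.count_le
  | cons x r ih =>
    rw [List.pairwise_cons] at hr
    rw [show l ++ x :: r = l ++ [x] ++ r by simp, ih hr.2, isLatticeAt_append_singleton]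
    have hr0 : x ≤ v + 1 → r.count (v + 2) = 0 := fun hx =>
      List.count_eq_zero.2 fun hmem => by have := hr.1 _ hmem; omega
    simp only [List.count_append, List.count_cons, List.count_nil, beq_iff_eq]
    constructor
    · rintro ⟨⟨hl, h1⟩, h2⟩
      have := hl.count_le
      refine ⟨hl, ?_⟩
      split_ifs at h1 h2 ⊢ <;> omega
    · rintro ⟨hl, h⟩
      have := hl.count_le
      refine ⟨⟨hl, ?_⟩, ?_⟩ <;>
        split_ifs at h ⊢ <;> omega

end Lattice

section Word

variable {m : ℕ} {len : ℕ → ℕ} {f : ℕ → ℕ → ℕ}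

lemma count_rowReverse (g : ℕ → ℕ) (L x : ℕ) :
    (((List.range L).reverse).map g).count x = countEq g x L := by
  rw [List.map_reverse, List.count_reverse, List.count_eq_countP, List.countP_map,
    List.countP_eq_length_filter, countEq, card_def, filter_val, range_val,
    Multiset.range, Multiset.filter_coe, Multiset.coe_card]
  rfl

lemma pairwise_rowReverse {g : ℕ → ℕ} {L : ℕ} (hg : MonotoneOn g (Set.Iio L)) :
    (((List.range L).reverse).map g).Pairwise (· ≥ ·) := by
  rw [List.pairwise_map, List.pairwise_reverse]
  refine List.pairwise_lt_range.imp_of_mem fun ha hb hab => ?_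
  simp only [List.mem_range] at ha hb
  exact hg ha hb hab.le

lemma word_succ (m : ℕ) (len : ℕ → ℕ) (f : ℕ → ℕ → ℕ) :
    word (m + 1) len f = word m len f ++ ((List.range (len m)).reverse).map (f m) := by
  simp [word, List.range_succ]

lemma count_word (m : ℕ) (len : ℕ → ℕ) (f : ℕ → ℕ → ℕ) (x : ℕ) :
    (word m len f).count x = cntRows len f x m := by
  induction m with
  | zero => rfl
  | succ n ih => rw [word_succ, List.count_append, ih, count_rowReverse, cntRows, cntRows,
      sum_range_succ, rowCount, countEq]

lemma cntRows_succ (len : ℕ → ℕ) (f : ℕ → ℕ → ℕ) (x i : ℕ) :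
    cntRows len f x (i + 1) = cntRows len f x i + rowCount len f i x :=
  sum_range_succ _ _

lemma RowsWeak.monotoneOn (h : RowsWeak m len f) {i : ℕ} (hi : i < m) :
    MonotoneOn (f i) (Set.Iio (len i)) :=
  monotoneOn_Iio_of_le_succ (h i hi)

lemma RowsWeak.of_succ (h : RowsWeak (m + 1) len f) : RowsWeak m len f :=
  fun i hi => h i (by omega)

lemma isLatticeAt_word_iff (h : RowsWeak m len f) (v : ℕ) :
    IsLatticeAt v (word m len f) ↔
      ∀ i < m, cntRows len f (v + 2) (i + 1) ≤ cntRows len f (v + 1) i := by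
  induction m with
  | zero => simp [IsLatticeAt, word]
  | succ n ih =>
    rw [word_succ, isLatticeAt_append_of_pairwise_ge
        (pairwise_rowReverse (RowsWeak.monotoneOn h n.lt_succ_self)),
      ih (RowsWeak.of_succ h), count_word, count_word, count_rowReverse, Nat.forall_lt_succ_right,
      cntRows_succ len f (v + 2) n]
    rfl

lemma isLatticeWord_word_iff (h : RowsWeak m len f) :
    IsLatticeWord (word m len f) ↔
      ∀ v, ∀ i < m, cntRows len f (v + 2) (i + 1) ≤ cntRows len f (v + 1) i := by
  simp only [isLatticeWord_iff_forall_isLatticeAt, isLatticeAt_word_iff h]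

end Word

section Theta

variable {m : ℕ} {len μ : ℕ → ℕ} {f : ℕ → ℕ → ℕ}

lemma colsStrict_zero_iff :
    ColsStrict m (fun _ => 0) len f ↔
      ∀ i j, i + 1 < m → j < len i → j < len (i + 1) → f i j < f (i + 1) j := by
  simp [ColsStrict]

lemma rowCount_eq_zero {i v : ℕ} (h : ∀ j < len i, f i j ≠ v) : rowCount len f i v = 0 :=
  card_eq_zero.2 (filter_eq_empty_iff.2 fun j hj => h j (mem_range.1 hj))

lemma entriesLE_of_content {η : ℕ → ℕ} (hfil : IsFilling m len f)
    (hcont : ∀ v, content m len f (v + 1) = η v) (hη : ∀ v, m ≤ v → η v = 0) :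
    EntriesLE m f := by
  intro i k
  by_contra! hk
  have hik : i < m ∧ k < len i := by
    by_contra! h
    have := hfil.2 i k (by omega)
    omega
  obtain ⟨w, hw⟩ : ∃ w, f i k = w + 1 := ⟨f i k - 1, by omega⟩
  have hrow : 0 < rowCount len f i (w + 1) :=
    card_pos.2 ⟨k, by simp [hik.2, hw]⟩
  have : rowCount len f i (w + 1) ≤ content m len f (w + 1) :=
    single_le_sum (f := fun r => rowCount len f r (w + 1)) (fun _ _ => Nat.zero_le _)
      (mem_range.2 hik.1)
  rw [hcont, hη w (by omega)] at this
  omega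

lemma theta_of_lt {k b : ℕ} (hk : k < m) (hb : b < μ k) :
    theta m len μ f k b = sortedRow m (fun r => rowCount len f r (k + 1)) b :=
  if_pos ⟨hk, hb⟩

lemma theta_isFilling : IsFilling m μ (theta m len μ f) :=
  ⟨fun k b hk hb => by rw [theta_of_lt hk hb, sortedRow]; omega,
    fun k b h => if_neg (by omega)⟩

lemma theta_rowsWeak : RowsWeak m μ (theta m len μ f) := fun k hk b hb => by
  rw [theta_of_lt hk (by omega), theta_of_lt hk hb]
  exact sortedRow_mono _ _ b.le_succ

lemma rowCount_theta (hfil : IsFilling m len f) (hcont : ∀ v, content m len f (v + 1) = μ v)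
    (hle : EntriesLE m f) (r x : ℕ) :
    rowCount μ (theta m len μ f) r (x + 1) = rowCount len f x (r + 1) := by
  rcases lt_or_ge r m with hr | hr
  · have hsum : partialSum (fun v => rowCount len f v (r + 1)) m = μ r := hcont r
    rcases lt_or_ge x m with hx | hx
    · rw [← countEq_sortedRow (c := fun v => rowCount len f v (r + 1)) hx, hsum]
      exact congrArg card (filter_congr fun b hb => by rw [theta_of_lt hr (mem_range.1 hb)])
    · rw [rowCount_eq_zero fun b hb => ?_, rowCount_eq_zero fun j _ => ?_]
      · rw [hfil.2 x j (Or.inl hx)]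
        omega
      · rw [theta_of_lt hr hb]
        have := sortedRow_le (hsum ▸ hb)
        omega
  · rw [rowCount_eq_zero fun b _ => ?_, rowCount_eq_zero fun j _ => ?_]
    · have := hle x j
      omega
    · rw [theta, if_neg (by omega)]
      omega

lemma IsFilling.pos (hfil : IsFilling m len f) (hlen : ∀ i, m ≤ i → len i = 0) (i : ℕ) :
    ∀ k < len i, 0 < f i k := fun k hk =>
  hfil.1 i k (by by_contra! h; have := hlen i h; omega) hk

lemma cntRows_theta (hfil : IsFilling m len f) (hcont : ∀ v, content m len f (v + 1) = μ v)
    (hle : EntriesLE m f) (hlen : ∀ i, m ≤ i → len i = 0) (x n : ℕ) :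
    cntRows μ (theta m len μ f) (x + 1) n = countLE (f x) n (len x) := by
  rw [countLE_eq_sum_countEq (IsFilling.pos hfil hlen x)]
  exact sum_congr rfl fun r _ => rowCount_theta hfil hcont hle r x

lemma content_theta (hfil : IsFilling m len f) (hcont : ∀ v, content m len f (v + 1) = μ v)
    (hle : EntriesLE m f) (hlen : ∀ i, m ≤ i → len i = 0) (v : ℕ) :
    content m μ (theta m len μ f) (v + 1) = len v := by
  rw [content, ← cntRows, cntRows_theta hfil hcont hle hlen, countLE,
    filter_true_of_mem fun k _ => hle v k, card_range]

lemma theta_theta (hfil : IsFilling m len f) (hrw : RowsWeak m len f)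
    (hcont : ∀ v, content m len f (v + 1) = μ v) (hle : EntriesLE m f) :
    theta m μ len (theta m len μ f) = f := by
  funext k b
  by_cases hkb : k < m ∧ b < len k
  · rw [theta_of_lt hkb.1 hkb.2]
    simp_rw [rowCount_theta hfil hcont hle]
    exact (eq_sortedRow_countEq (RowsWeak.monotoneOn hrw hkb.1) (hfil.1 k · hkb.1)
      (fun j _ => hle k j) hkb.2).symm
  · rw [theta, if_neg hkb, hfil.2 k b (by omega)]

end Theta

section Bijection

variable {m : ℕ} {lam mu : ℕ → ℕ}

lemma theta_mem_LRset (hlam : ∀ i, lam (i + 1) ≤ lam i) (hlam0 : ∀ i, m ≤ i → lam i = 0)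
    (hmu0 : ∀ i, m ≤ i → mu i = 0) {f : ℕ → ℕ → ℕ} (hf : f ∈ SSTset m (fun _ => 0) lam mu) :
    theta m lam mu f ∈ LRset m mu lam := by
  obtain ⟨hfil, ⟨-, hcol⟩, hcont⟩ := hf
  have hle := entriesLE_of_content hfil hcont hmu0
  refine ⟨theta_isFilling, ⟨theta_rowsWeak, ?_⟩, content_theta hfil hcont hle hlam0⟩
  rw [isLatticeWord_word_iff theta_rowsWeak]
  intro v i _
  rw [cntRows_theta hfil hcont hle hlam0, cntRows_theta hfil hcont hle hlam0]
  by_cases hv : v + 1 < m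
  · exact countLE_succ_le_of_lt (hlam v)
      (fun j hj => colsStrict_zero_iff.1 hcol v j hv (hj.trans_le (hlam v)) hj) i
  · simp [countLE, hlam0 (v + 1) (by omega)]

/-- Column strictness of `θ g` is the lattice condition of `g`, read through `θ (θ g) = g`. -/
lemma theta_mem_SSTset (hlam0 : ∀ i, m ≤ i → lam i = 0) (hmu0 : ∀ i, m ≤ i → mu i = 0)
    {g : ℕ → ℕ → ℕ} (hg : g ∈ LRset m mu lam) :
    theta m mu lam g ∈ SSTset m (fun _ => 0) lam mu := by
  obtain ⟨hfil, ⟨hrw, hlat⟩, hcont⟩ := hg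
  have hle := entriesLE_of_content hfil hcont hlam0
  set T := theta m mu lam g
  have hTfil : IsFilling m lam T := theta_isFilling
  have hTcont := content_theta hfil hcont hle hmu0
  have hTle := entriesLE_of_content hTfil hTcont hmu0
  have hTT : theta m lam mu T = g := theta_theta hfil hrw hcont hle
  refine ⟨hTfil, ⟨theta_rowsWeak, colsStrict_zero_iff.2 fun i j hi hj hj' => ?_⟩, hTcont⟩
  refine lt_of_countLE_succ_le (RowsWeak.monotoneOn theta_rowsWeak (by omega))
    (RowsWeak.monotoneOn theta_rowsWeak hi) (hTfil.1 _ · hi) (fun k _ => hTle _ k)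
    (fun w hw => ?_) hj'
  rw [← cntRows_theta hTfil hTcont hTle hlam0, ← cntRows_theta hTfil hTcont hTle hlam0, hTT]
  exact (isLatticeWord_word_iff hrw).1 hlat i w hw

end Bijection

end LRBijection

theorem theta_bijection_LR_general (m : ℕ) (lam mu : ℕ → ℕ)
    (hlam : ∀ i, lam (i + 1) ≤ lam i) (hlam0 : ∀ i, m ≤ i → lam i = 0)
    (hmu0 : ∀ i, m ≤ i → mu i = 0) :
    (∀ f ∈ SSTset m (fun _ => 0) lam mu, theta m lam mu f ∈ LRset m mu lam) ∧
    Set.BijOn (theta m lam mu) (SSTset m (fun _ => 0) lam mu) (LRset m mu lam) := by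
  have hmaps : ∀ f ∈ SSTset m (fun _ => 0) lam mu, theta m lam mu f ∈ LRset m mu lam :=
    fun _ => LRBijection.theta_mem_LRset hlam hlam0 hmu0
  have hinv : Set.InvOn (theta m mu lam) (theta m lam mu)
      (SSTset m (fun _ => 0) lam mu) (LRset m mu lam) := by
    constructor
    · rintro f ⟨hfil, ⟨hrw, -⟩, hcont⟩
      exact LRBijection.theta_theta hfil hrw hcont
        (LRBijection.entriesLE_of_content hfil hcont hmu0)
    · rintro g ⟨hfil, ⟨hrw, -⟩, hcont⟩
      exact LRBijection.theta_theta hfil hrw hcont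
        (LRBijection.entriesLE_of_content hfil hcont hlam0)
  exact ⟨hmaps, hinv.bijOn hmaps fun _ => LRBijection.theta_mem_SSTset hlam0 hmu0⟩

/-- For a partition `λ` with at most `m` parts, a composition
`μ` of length `m` with `|μ| = |λ|`, and `ν ∈ ℤ_{≥0}^{m-1}` with
`ν_i + μ_i ≥ μ_{i+1}`, every `θ_ν(T)` (`T ∈ SST(λ,μ)`) is an LR tableau of
shape `Sh_ν(μ)` and content `λ`, and `θ_ν` is a bijection from `SST(λ,μ)`
onto `LR(Sh_ν(μ),λ)`. -/
theorem theta_bijection_LR (m : ℕ) (lam mu nu : ℕ → ℕ)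
    (hlam : ∀ i, lam (i + 1) ≤ lam i) (hlam0 : ∀ i, m ≤ i → lam i = 0)
    (hmu0 : ∀ i, m ≤ i → mu i = 0)
    (hsize : ∑ i ∈ Finset.range m, mu i = ∑ i ∈ Finset.range m, lam i)
    (hnu : ∀ r, r + 1 < m → mu (r + 1) ≤ nu r + mu r) :
    (∀ f ∈ SSTset m (fun _ => 0) lam mu, theta m lam mu f ∈ LRset m mu lam) ∧
    Set.BijOn (theta m lam mu) (SSTset m (fun _ => 0) lam mu) (LRset m mu lam) :=
  theta_bijection_LR_general m lam mu hlam hlam0 hmu0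
end

section
/- Let λ be a partition with at most m parts, μ a composition of length m with |μ| = |λ|, and ν ∈ ℤ_{≥0}^{m−1} with ν_i + μ_i ≥ μ_{i+1} for all 1 ≤ i ≤ m−1. For every T ∈ SST(λ,μ), the filling θ_ν(T) of Sh_ν(μ) is a semistandard skew tableau if and only if ν_i ≥ d_i(T) for every 1 ≤ i ≤ m−1. -/
/-- `M` is a set of pairwise disjoint descent pairs for the value `v`:
each pair consists of a cell containing `v` and a cell containing `v+1`
strictly below it. -/
def IsDescentPairs (m : ℕ) (len : ℕ → ℕ) (f : ℕ → ℕ → ℕ) (v : ℕ)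
    (M : Finset ((ℕ × ℕ) × (ℕ × ℕ))) : Prop :=
  (∀ p ∈ M, p.1.1 < m ∧ p.1.2 < len p.1.1 ∧ p.2.1 < m ∧ p.2.2 < len p.2.1 ∧
    f p.1.1 p.1.2 = v ∧ f p.2.1 p.2.2 = v + 1 ∧ p.1.1 < p.2.1) ∧
  (∀ p ∈ M, ∀ q ∈ M, p ≠ q → p.1 ≠ q.1 ∧ p.2 ≠ q.2)

/-- `ζ_v(T)`: the maximal number of pairwise disjoint descent pairs `(v, v+1)`. -/
noncomputable def zeta (m : ℕ) (len : ℕ → ℕ) (f : ℕ → ℕ → ℕ) (v : ℕ) : ℕ :=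
  sSup {c | ∃ M, IsDescentPairs m len f v M ∧ M.card = c}

/-- the `i`-th exponent `d_i(T) = μ_{i+1} - ζ_i(T)` (here `μ` is 0-indexed,
so `μ_{i+1} = μ i`; the argument `i` is the 1-based index `1 ≤ i ≤ m-1`). -/
noncomputable def expnt (m : ℕ) (len : ℕ → ℕ) (μ : ℕ → ℕ) (f : ℕ → ℕ → ℕ) (i : ℕ) : ℕ :=
  μ i - zeta m len f i

/-!
`θ` only records, for each value `v`, the rows of the successive occurrences of `v` in `T`
(`occRow`). The column condition between rows `v` and `v + 1` of `θ`, which are shifted by `ν`,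
says that the `b`-th occurrence of `v + 1` lies strictly below the `(b - ν)`-th occurrence of
`v`. If so, these pairs are `μ_{v+1} - ν` disjoint descent pairs, whence `d_v ≤ ν`. Conversely,
let `A` be the row of the `b`-th occurrence of `v + 1` and split a maximum set of descent pairs
according to whether the lower cell lies in a row `≤ A`: those pairs have distinct upper cells
above row `A`, the others distinct lower cells below row `A`, of which there are fewer than
`μ_{v+1} - b`. So `ζ_v` is less than the number of `v`'s above row `A` plus `μ_{v+1} - b`, and
`d_v ≤ ν` turns this into the column condition.
-/

namespace Tableau

open Finset

variable {m : ℕ} {len : ℕ → ℕ} {f : ℕ → ℕ → ℕ} {v b : ℕ}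

lemma cntRows_mono (len : ℕ → ℕ) (f : ℕ → ℕ → ℕ) (v : ℕ) : Monotone (cntRows len f v) :=
  fun _ _ h => sum_le_sum_of_subset (range_subset_range.2 h)

lemma cntRows_succ (len : ℕ → ℕ) (f : ℕ → ℕ → ℕ) (v i : ℕ) :
    cntRows len f v (i + 1) = cntRows len f v i + rowCount len f i v :=
  sum_range_succ _ _

lemma cntRows_add_sum_Ico (len : ℕ → ℕ) (f : ℕ → ℕ → ℕ) (v : ℕ) {s t : ℕ} (h : s ≤ t) :
    cntRows len f v s + ∑ i ∈ Ico s t, rowCount len f i v = cntRows len f v t :=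
  sum_range_add_sum_Ico _ h

/-- The (0-indexed) row containing the `b`-th (0-indexed) occurrence of `v`, rows being
scanned top to bottom; this is what `theta` records. -/
def occRow (m : ℕ) (len : ℕ → ℕ) (f : ℕ → ℕ → ℕ) (v b : ℕ) : ℕ :=
  #{r ∈ range m | cntRows len f v (r + 1) ≤ b}

lemma occRow_mono (m : ℕ) (len : ℕ → ℕ) (f : ℕ → ℕ → ℕ) (v : ℕ) :
    Monotone (occRow m len f v) :=
  fun _ _ h => card_le_card (monotone_filter_right _ fun _ _ hr => hr.trans h)

lemma occRow_lt_iff {A : ℕ} (hA : A ≤ m) :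
    occRow m len f v b < A ↔ b < cntRows len f v A := by
  constructor
  · intro h
    by_contra! hb
    have : range A ⊆ {r ∈ range m | cntRows len f v (r + 1) ≤ b} := fun r hr => by
      rw [mem_range] at hr
      exact mem_filter.2 ⟨mem_range.2 (by omega), (cntRows_mono len f v (by omega)).trans hb⟩
    simpa [occRow] using (card_le_card this).trans_lt h
  · intro hb
    have hA0 : A ≠ 0 := by rintro rfl; simp [cntRows] at hb
    have : {r ∈ range m | cntRows len f v (r + 1) ≤ b} ⊆ range (A - 1) := fun r hr => by
      rw [mem_filter, mem_range] at hr
      by_contra! hrA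
      rw [mem_range] at hrA
      exact absurd ((cntRows_mono len f v (by omega)).trans hr.2) (not_le.2 hb)
    simpa [occRow] using (card_le_card this).trans_lt (by simp; omega)

lemma occRow_lt (hb : b < cntRows len f v m) : occRow m len f v b < m :=
  (occRow_lt_iff le_rfl).2 hb

noncomputable def occCell (m : ℕ) (len : ℕ → ℕ) (f : ℕ → ℕ → ℕ) (v b : ℕ) : ℕ × ℕ :=
  let i := occRow m len f v b
  (i, Nat.nth (fun k => k < len i ∧ f i k = v) (b - cntRows len f v i))

lemma finite_cols (len : ℕ → ℕ) (f : ℕ → ℕ → ℕ) (i v : ℕ) :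
    {k | k < len i ∧ f i k = v}.Finite :=
  (Set.finite_lt_nat (len i)).subset fun _ hk => hk.1

lemma card_finite_cols_toFinset (i : ℕ) :
    #(finite_cols len f i v).toFinset = rowCount len f i v := by
  congr 1; ext k; simp

lemma occRow_spec (hb : b < cntRows len f v m) :
    cntRows len f v (occRow m len f v b) ≤ b ∧ b < cntRows len f v (occRow m len f v b + 1) := by
  have hi := occRow_lt hb
  exact ⟨not_lt.1 fun h => lt_irrefl _ ((occRow_lt_iff hi.le).2 h),
    (occRow_lt_iff hi).1 (Nat.lt_succ_self _)⟩

lemma occCell_spec (hb : b < cntRows len f v m) :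
    (occCell m len f v b).1 < m ∧ (occCell m len f v b).2 < len (occCell m len f v b).1 ∧
      f (occCell m len f v b).1 (occCell m len f v b).2 = v := by
  obtain ⟨h1, h2⟩ := occRow_spec hb
  rw [cntRows_succ] at h2
  refine ⟨occRow_lt hb, Nat.nth_mem_of_lt_card (finite_cols len f _ v) ?_⟩
  rw [card_finite_cols_toFinset]
  omega

lemma occCell_injOn : Set.InjOn (occCell m len f v) (Set.Iio (cntRows len f v m)) := by
  intro b hb b' hb' h
  obtain ⟨hrow, hcol⟩ := Prod.mk.inj h
  obtain ⟨h1, h2⟩ := occRow_spec hb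
  obtain ⟨h1', h2'⟩ := occRow_spec hb'
  rw [cntRows_succ] at h2 h2'
  rw [hrow] at hcol h1 h2
  have := Nat.nth_injOn (finite_cols len f _ v)
    (by rw [Set.mem_Iio, card_finite_cols_toFinset]; omega)
    (by rw [Set.mem_Iio, card_finite_cols_toFinset]; omega) hcol
  omega

def cells (len : ℕ → ℕ) (f : ℕ → ℕ → ℕ) (v : ℕ) (I : Finset ℕ) : Finset (ℕ × ℕ) :=
  I.biUnion fun i => {i} ×ˢ {k ∈ range (len i) | f i k = v}

lemma mem_cells {I : Finset ℕ} {c : ℕ × ℕ} :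
    c ∈ cells len f v I ↔ c.1 ∈ I ∧ c.2 < len c.1 ∧ f c.1 c.2 = v := by
  obtain ⟨i, k⟩ := c
  simp [cells]

lemma card_cells (I : Finset ℕ) : #(cells len f v I) = ∑ i ∈ I, rowCount len f i v := by
  rw [cells, card_biUnion]
  · simp [rowCount]
  · intro i _ j _ hij
    simp only [disjoint_left, mem_product, mem_singleton]
    exact fun c hi hj => hij (hi.1.symm.trans hj.1)

lemma card_le_of_isDescentPairs {M : Finset ((ℕ × ℕ) × (ℕ × ℕ))}
    (hM : IsDescentPairs m len f v M) (A : ℕ) :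
    #M ≤ cntRows len f v A + ∑ i ∈ Ico (A + 1) m, rowCount len f i (v + 1) := by
  rw [← card_filter_add_card_filter_not (fun p => p.2.1 ≤ A)]
  gcongr
  · rw [cntRows, ← card_cells]
    refine card_le_card_of_injOn Prod.fst (fun p hp => ?_) fun p hp q hq h => ?_
    · rw [mem_coe, mem_filter] at hp
      obtain ⟨-, h2, -, -, h5, -, h7⟩ := hM.1 p hp.1
      exact mem_cells.2 ⟨mem_range.2 (by omega), h2, h5⟩
    · by_contra hpq
      exact (hM.2 p (mem_filter.1 hp).1 q (mem_filter.1 hq).1 hpq).1 h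
  · rw [← card_cells]
    refine card_le_card_of_injOn Prod.snd (fun p hp => ?_) fun p hp q hq h => ?_
    · rw [mem_coe, mem_filter] at hp
      obtain ⟨-, -, h3, h4, -, h6, -⟩ := hM.1 p hp.1
      exact mem_cells.2 ⟨mem_Ico.2 ⟨by omega, h3⟩, h4, h6⟩
    · by_contra hpq
      exact (hM.2 p (mem_filter.1 hp).1 q (mem_filter.1 hq).1 hpq).2 h

lemma zeta_bddAbove :
    BddAbove {c | ∃ M, IsDescentPairs m len f v M ∧ #M = c} := by
  refine ⟨cntRows len f v m, ?_⟩
  rintro _ ⟨M, hM, rfl⟩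
  simpa using card_le_of_isDescentPairs hM m

lemma exists_isDescentPairs_card_eq_zeta :
    ∃ M, IsDescentPairs m len f v M ∧ #M = zeta m len f v :=
  Nat.sSup_mem (s := {c | ∃ M, IsDescentPairs m len f v M ∧ #M = c})
    ⟨0, ∅, by simp [IsDescentPairs], rfl⟩ zeta_bddAbove

lemma card_le_zeta {M : Finset ((ℕ × ℕ) × (ℕ × ℕ))} (hM : IsDescentPairs m len f v M) :
    #M ≤ zeta m len f v :=
  le_csSup zeta_bddAbove ⟨M, hM, rfl⟩

lemma occRow_lt_of_sub_zeta_le {ν : ℕ} (h : cntRows len f (v + 1) m - zeta m len f v ≤ ν)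
    (hνb : ν ≤ b) (hb : b < cntRows len f (v + 1) m) :
    occRow m len f v (b - ν) < occRow m len f (v + 1) b := by
  set A := occRow m len f (v + 1) b
  have hA : A < m := occRow_lt hb
  obtain ⟨M, hM, hMcard⟩ : ∃ M, IsDescentPairs m len f v M ∧ #M = zeta m len f v :=
    exists_isDescentPairs_card_eq_zeta
  have hcard := card_le_of_isDescentPairs hM A
  have hrest := cntRows_add_sum_Ico len f (v + 1) (s := A + 1) hA
  have hbA : b < cntRows len f (v + 1) (A + 1) := (occRow_spec hb).2
  rw [occRow_lt_iff hA.le]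
  omega

lemma sub_zeta_le_of_occRow_lt {ν : ℕ}
    (h : ∀ b, ν ≤ b → b < cntRows len f (v + 1) m →
      occRow m len f v (b - ν) < occRow m len f (v + 1) b) :
    cntRows len f (v + 1) m - zeta m len f v ≤ ν := by
  set N := cntRows len f (v + 1) m
  have hlow : ∀ b ∈ Ico ν N, b - ν < cntRows len f v m := fun b hb => by
    rw [mem_Ico] at hb
    have hA := occRow_lt hb.2
    exact ((occRow_lt_iff hA.le).1 (h b hb.1 hb.2)).trans_le (cntRows_mono len f v hA.le)
  set M := (Ico ν N).image fun b => (occCell m len f v (b - ν), occCell m len f (v + 1) b)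
  have hM : IsDescentPairs m len f v M := by
    constructor
    · simp only [M, mem_image, forall_exists_index, and_imp]
      rintro _ b hb rfl
      obtain ⟨h1, h2, h3⟩ := occCell_spec (hlow b hb)
      obtain ⟨h4, h5, h6⟩ := occCell_spec (mem_Ico.1 hb).2
      exact ⟨h1, h2, h4, h5, h3, h6, h b (mem_Ico.1 hb).1 (mem_Ico.1 hb).2⟩
    · simp only [M, mem_image]
      rintro _ ⟨b, hb, rfl⟩ _ ⟨b', hb', rfl⟩ hne
      have hbb' : b ≠ b' := fun e => hne (e ▸ rfl)
      rw [mem_Ico] at hb hb'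
      refine ⟨fun e => hbb' ?_, fun e => hbb' (occCell_injOn hb.2 hb'.2 e)⟩
      have := occCell_injOn (hlow b (mem_Ico.2 hb)) (hlow b' (mem_Ico.2 hb')) e
      omega
  have hMcard : #M = N - ν := by
    rw [card_image_of_injOn, Nat.card_Ico]
    intro b hb b' hb' e
    exact occCell_injOn (mem_Ico.1 hb).2 (mem_Ico.1 hb').2 (Prod.mk.inj e).2
  have := card_le_zeta hM
  omega

theorem sub_zeta_le_iff {ν : ℕ} :
    cntRows len f (v + 1) m - zeta m len f v ≤ ν ↔
      ∀ b, ν ≤ b → b < cntRows len f (v + 1) m →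
        occRow m len f v (b - ν) < occRow m len f (v + 1) b :=
  ⟨fun h _ => occRow_lt_of_sub_zeta_le h, sub_zeta_le_of_occRow_lt⟩

lemma theta_of_lt {μ : ℕ → ℕ} {k : ℕ} (hk : k < m) (hb : b < μ k) :
    theta m len μ f k b = 1 + occRow m len f (k + 1) b :=
  if_pos ⟨hk, hb⟩

lemma rowsWeak_theta (μ : ℕ → ℕ) : RowsWeak m μ (theta m len μ f) := fun i hi k hk => by
  rw [theta_of_lt hi (by omega), theta_of_lt hi hk]
  exact Nat.add_le_add_left (occRow_mono m len f _ k.le_succ) 1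

lemma shOff_eq_add (nu : ℕ → ℕ) {r : ℕ} (hr : r + 1 < m) :
    shOff m nu r = nu r + shOff m nu (r + 1) :=
  sum_eq_sum_Ico_succ_bot (by omega) _

lemma colsStrict_theta_iff {μ nu : ℕ → ℕ} (hnu : ∀ r, r + 1 < m → μ (r + 1) ≤ nu r + μ r) :
    ColsStrict m (shOff m nu) μ (theta m len μ f) ↔
      ∀ r, r + 1 < m → ∀ b, nu r ≤ b → b < μ (r + 1) →
        occRow m len f (r + 1) (b - nu r) < occRow m len f (r + 2) b := by
  constructor
  · intro h r hr b hνb hb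
    have hoff := shOff_eq_add nu hr
    have hμ := hnu r hr
    have := h r (shOff m nu (r + 1) + b) hr (by omega) (by omega) (by omega) (by omega)
    rwa [show shOff m nu (r + 1) + b - shOff m nu r = b - nu r by omega,
      Nat.add_sub_cancel_left, theta_of_lt (by omega) (by omega), theta_of_lt hr hb,
      Nat.add_lt_add_iff_left] at this
  · intro h r j hr hj₁ hj₂ hj₃ hj₄
    have hoff := shOff_eq_add nu hr
    rw [show j - shOff m nu r = j - shOff m nu (r + 1) - nu r by omega,
      theta_of_lt (by omega) (by omega), theta_of_lt hr (by omega), Nat.add_lt_add_iff_left]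
    exact h r hr _ (by omega) (by omega)

end Tableau

open Tableau in
theorem theta_semistandard_iff_general (m : ℕ) (lam mu nu : ℕ → ℕ)
    (hnu : ∀ r, r + 1 < m → mu (r + 1) ≤ nu r + mu r) :
    ∀ f ∈ SSTset m (fun _ => 0) lam mu,
      (Semistandard m (shOff m nu) mu (theta m lam mu f) ↔
        ∀ r, r + 1 < m → expnt m lam mu f (r + 1) ≤ nu r) := by
  rintro f ⟨-, -, hcontent⟩
  rw [Semistandard, and_iff_right (rowsWeak_theta mu), colsStrict_theta_iff hnu]
  refine forall₂_congr fun r _ => ?_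
  rw [expnt, ← hcontent (r + 1)]
  exact sub_zeta_le_iff.symm

/-- For `T ∈ SST(λ,μ)`, the filling `θ_ν(T)` of `Sh_ν(μ)` is
semistandard iff `ν_i ≥ d_i(T)` for every `1 ≤ i ≤ m-1` (here `nu r = ν_{r+1}`). -/
theorem theta_semistandard_iff (m : ℕ) (lam mu nu : ℕ → ℕ)
    (hlam : ∀ i, lam (i + 1) ≤ lam i) (hlam0 : ∀ i, m ≤ i → lam i = 0)
    (hmu0 : ∀ i, m ≤ i → mu i = 0)
    (hsize : ∑ i ∈ Finset.range m, mu i = ∑ i ∈ Finset.range m, lam i)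
    (hnu : ∀ r, r + 1 < m → mu (r + 1) ≤ nu r + mu r) :
    ∀ f ∈ SSTset m (fun _ => 0) lam mu,
      (Semistandard m (shOff m nu) mu (theta m lam mu f) ↔
        ∀ r, r + 1 < m → expnt m lam mu f (r + 1) ≤ nu r) :=
  theta_semistandard_iff_general m lam mu nu hnu
end
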